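/- arXiv:1211.2600 — 9 statements merged into one kernel-verified Lean document; each statement's English description precedes it below -/
import Mathlib

section
/- Let q ≥ 2 and N ≥ 1 be integers, let G be a finite group of order (qN)², and let H be a finite group of order q with identity element 1. Let Σ be a set of (q−1)N subgroups of G, each of order qN, such that any two distinct members of Σ intersect in {1}. Suppose Σ is partitioned into q−1 subsets Σ_i of size N, indexed by the elements i ∈ H∖{1}. For i ∈ H∖{1} set D_i := (⋃ Σ_i) ∖ {1}, and set D_1 := G ∖ ⋃_{i≠1} D_i. Then the function f : G → H defined by f(x) = i for x ∈ D_i (for each i ∈ H) is bent; that is, for every z ∈ G with z ≠ 1 and every b ∈ H, the number of x ∈ G with f(xz)·f(x)⁻¹ = b equals qN². -/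
/-!
For `z ≠ 1`, let `T i j` be the number of `x` with `f x = i` and `f (x * z) = j`; the count to be
computed is the sum of `T` along the "diagonal" `j = b * i`. When `i, j ≠ 1`, `T i j` splits into a
sum over pairs `X ∈ Σ_i`, `Y ∈ Σ_j` of the number of `x ∈ X \ {1}` with `x * z ∈ Y \ {1}`. Two
distinct members of `Σ` have order `qN` and meet trivially, so they are complements in `G` and
exactly one `x ∈ X` has `x * z ∈ Y`; for `X = Y` there are `|X|` or no such `x`. This gives `T i j`
in closed form in terms of how many members of `Σ_i` and `Σ_j` contain `z`. The row and column
sums of `T` are the fibre sizes of `f`, which pins down the remaining row and column `1`; the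
resulting closed form sums to `qN²` along every diagonal.
-/

open Finset

section PuncturedSubgroups

open scoped Classical

variable {G : Type*} [Group G]

theorem card_filter_ne_one_and_mul_ne_one {z : G} (hz : z ≠ 1) (s : Finset G) :
    (#{x ∈ s | x ≠ 1 ∧ x * z ≠ 1} : ℤ) =
      #s - (if (1 : G) ∈ s then 1 else 0) - (if z⁻¹ ∈ s then 1 else 0) := by
  have hfilter : {x ∈ s | x ≠ 1 ∧ x * z ≠ 1} = s \ {1, z⁻¹} := by
    ext x
    simp [mul_eq_one_iff_eq_inv, and_comm]
  have hne : (1 : G) ≠ z⁻¹ := by simpa [eq_comm] using hz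
  rw [hfilter, ← card_sdiff_add_card_inter s {1, z⁻¹}]
  split_ifs with h1 h2 h2 <;>
    simp [inter_insert_of_mem, inter_insert_of_notMem, h1, h2, hne, sub_sub, one_add_one_eq_two]

theorem card_filter_mem_iUnion_sdiff_one {α : Type*} (s : Finset α) (g : α → G)
    {𝒳 : Finset (Subgroup G)} (h𝒳 : ∀ X ∈ 𝒳, ∀ Y ∈ 𝒳, X ≠ Y → X ⊓ Y = ⊥) :
    #{a ∈ s | g a ∈ (⋃ X ∈ 𝒳, (X : Set G)) \ {1}} =
      ∑ X ∈ 𝒳, #{a ∈ s | g a ∈ (X : Set G) \ {1}} := by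
  have hunion : {a ∈ s | g a ∈ (⋃ X ∈ 𝒳, (X : Set G)) \ {1}} =
      𝒳.biUnion fun X => {a ∈ s | g a ∈ (X : Set G) \ {1}} := by
    ext a
    simp only [mem_filter, mem_biUnion, Set.mem_sdiff, Set.mem_iUnion, SetLike.mem_coe,
      exists_prop]
    aesop
  rw [hunion, card_biUnion]
  intro X hX Y hY hXY
  refine disjoint_filter.mpr fun a _ haX haY => haX.2 ?_
  have hmem : g a ∈ X ⊓ Y := ⟨haX.1, haY.1⟩
  rwa [h𝒳 X hX Y hY hXY, Subgroup.mem_bot] at hmem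

variable [Fintype G]

theorem Subgroup.card_punctured_add_one (X : Subgroup G) :
    #{x | x ∈ (X : Set G) \ {1}} + 1 = Nat.card X := by
  have herase : ({x | x ∈ (X : Set G) \ {1}} : Finset G) = ({x | x ∈ X} : Finset G).erase 1 := by
    ext x
    simp [and_comm]
  rw [herase, card_erase_add_one (by simp [X.one_mem]), Nat.card_eq_fintype_card,
    Fintype.card_subtype]

theorem Subgroup.card_mem_and_mul_mem_self (z : G) (X : Subgroup G) :
    #{x | x ∈ X ∧ x * z ∈ X} = if z ∈ X then Nat.card X else 0 := by
  split_ifs with hzX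
  · have hfilter : ({x | x ∈ X ∧ x * z ∈ X} : Finset G) = ({x | x ∈ X} : Finset G) := by
      ext x
      simpa using fun hx => X.mul_mem hx hzX
    rw [hfilter, Nat.card_eq_fintype_card, Fintype.card_subtype]
  · rw [card_eq_zero, filter_eq_empty_iff]
    rintro x - ⟨hx, hxz⟩
    exact hzX (by simpa using X.mul_mem (X.inv_mem hx) hxz)

theorem Subgroup.IsComplement'.card_mem_and_mul_mem {X Y : Subgroup G} (h : X.IsComplement' Y)
    (z : G) : #{x | x ∈ X ∧ x * z ∈ Y} = 1 := by
  obtain ⟨⟨u, v⟩, huv, huniq⟩ := h.existsUnique z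
  rw [Finset.card_eq_one]
  refine ⟨(u : G)⁻¹, ?_⟩
  ext x
  simp only [mem_filter, mem_univ, true_and, mem_singleton]
  constructor
  · rintro ⟨hx, hxz⟩
    have := congrArg (fun p : X × Y => (p.1 : G)⁻¹) <|
      huniq (⟨x⁻¹, X.inv_mem hx⟩, ⟨x * z, hxz⟩) (by simp)
    simpa using this
  · rintro rfl
    exact ⟨X.inv_mem u.2, by simp [← huv]⟩

theorem Subgroup.card_punctured_and_mul_mem_punctured {z : G} (hz : z ≠ 1) (X Y : Subgroup G) :
    (#{x | x ∈ (X : Set G) \ {1} ∧ x * z ∈ (Y : Set G) \ {1}} : ℤ) =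
      #{x | x ∈ X ∧ x * z ∈ Y} - (if z ∈ Y then 1 else 0) - (if z ∈ X then 1 else 0) := by
  have hfilter : ({x | x ∈ (X : Set G) \ {1} ∧ x * z ∈ (Y : Set G) \ {1}} : Finset G) =
      ({x ∈ {x | x ∈ X ∧ x * z ∈ Y} | x ≠ 1 ∧ x * z ≠ 1} : Finset G) := by
    ext x
    simp only [mem_filter, mem_univ, true_and, Set.mem_sdiff, SetLike.mem_coe,
      Set.mem_singleton_iff]
    tauto
  rw [hfilter, card_filter_ne_one_and_mul_ne_one hz]
  simp [X.one_mem, Y.one_mem]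

theorem Subgroup.card_punctured_and_mul_mem_punctured_of_card {z : G} (hz : z ≠ 1) {n : ℕ}
    (hG : Nat.card G = n ^ 2) {X Y : Subgroup G} (hX : Nat.card X = n) (hY : Nat.card Y = n)
    (hXY : X ≠ Y → X ⊓ Y = ⊥) :
    (#{x | x ∈ (X : Set G) \ {1} ∧ x * z ∈ (Y : Set G) \ {1}} : ℤ) =
      1 - (if z ∈ X then 1 else 0) - (if z ∈ Y then 1 else 0) +
        if X = Y then (n : ℤ) * (if z ∈ X then 1 else 0) - 1 else 0 := by
  rw [card_punctured_and_mul_mem_punctured hz]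
  by_cases h : X = Y
  · subst h
    rw [card_mem_and_mul_mem_self, hX, if_pos rfl]
    split_ifs <;> ring
  · have hcompl : X.IsComplement' Y :=
      isComplement'_of_card_mul_and_disjoint (by rw [hX, hY, hG, sq]) (disjoint_iff.mpr (hXY h))
    rw [hcompl.card_mem_and_mul_mem, if_neg h]
    ring

theorem card_mem_punctured_iUnion {n : ℕ} {𝒳 : Finset (Subgroup G)}
    (h𝒳n : ∀ X ∈ 𝒳, Nat.card X = n) (h𝒳 : ∀ X ∈ 𝒳, ∀ X' ∈ 𝒳, X ≠ X' → X ⊓ X' = ⊥) :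
    (#{x | x ∈ (⋃ X ∈ 𝒳, (X : Set G)) \ {1}} : ℤ) = #𝒳 * (n - 1) := by
  rw [card_filter_mem_iUnion_sdiff_one _ (fun x => x) h𝒳, Nat.cast_sum,
    sum_congr rfl fun X hX => ?_, sum_const, nsmul_eq_mul]
  rw [← h𝒳n X hX, ← X.card_punctured_add_one]
  push_cast
  ring

theorem card_mem_punctured_iUnion_and_mul_mem {z : G} (hz : z ≠ 1) {n : ℕ}
    (hG : Nat.card G = n ^ 2) {𝒳 𝒴 : Finset (Subgroup G)}
    (h𝒳n : ∀ X ∈ 𝒳, Nat.card X = n) (h𝒴n : ∀ Y ∈ 𝒴, Nat.card Y = n)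
    (h𝒳 : ∀ X ∈ 𝒳, ∀ X' ∈ 𝒳, X ≠ X' → X ⊓ X' = ⊥)
    (h𝒴 : ∀ Y ∈ 𝒴, ∀ Y' ∈ 𝒴, Y ≠ Y' → Y ⊓ Y' = ⊥)
    (h𝒳𝒴 : ∀ X ∈ 𝒳, ∀ Y ∈ 𝒴, X ≠ Y → X ⊓ Y = ⊥) :
    (#{x | x ∈ (⋃ X ∈ 𝒳, (X : Set G)) \ {1} ∧ x * z ∈ (⋃ Y ∈ 𝒴, (Y : Set G)) \ {1}} : ℤ) =
      #𝒳 * #𝒴 - #𝒴 * #{X ∈ 𝒳 | z ∈ X} - #𝒳 * #{Y ∈ 𝒴 | z ∈ Y} +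
        n * #{X ∈ 𝒳 ∩ 𝒴 | z ∈ X} - #(𝒳 ∩ 𝒴) := by
  have hsum : #{x | x ∈ (⋃ X ∈ 𝒳, (X : Set G)) \ {1} ∧ x * z ∈ (⋃ Y ∈ 𝒴, (Y : Set G)) \ {1}} =
      ∑ X ∈ 𝒳, ∑ Y ∈ 𝒴, #{x | x ∈ (X : Set G) \ {1} ∧ x * z ∈ (Y : Set G) \ {1}} := by
    rw [← filter_filter, filter_comm, card_filter_mem_iUnion_sdiff_one _ (fun x => x) h𝒳]
    refine sum_congr rfl fun X _ => ?_
    rw [filter_comm, card_filter_mem_iUnion_sdiff_one _ (· * z) h𝒴]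
    simp only [filter_filter]
  push_cast [hsum]
  rw [sum_congr rfl fun X hX => sum_congr rfl fun Y hY =>
    Subgroup.card_punctured_and_mul_mem_punctured_of_card hz hG (h𝒳n X hX) (h𝒴n Y hY)
      (h𝒳𝒴 X hX Y hY)]
  simp only [mul_ite, mul_one, mul_zero, sum_add_distrib, sum_sub_distrib, sum_const,
    nsmul_eq_mul, sum_boole, sum_ite_eq, sum_ite_mem]
  simp only [← sum_filter, sum_const, nsmul_eq_mul]
  ring

end PuncturedSubgroups

theorem Fintype.eq_of_sum_eq_of_forall_ne {α R : Type*} [Fintype α] [DecidableEq α]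
    [AddCommGroup R] {u v : α → R} (a₀ : α) (hsum : ∑ a, u a = ∑ a, v a)
    (hne : ∀ a ≠ a₀, u a = v a) : u = v := by
  funext a
  by_cases ha : a = a₀
  · subst ha
    have hrest : ∑ b ∈ univ.erase a, u b = ∑ b ∈ univ.erase a, v b :=
      Finset.sum_congr rfl fun b hb => hne b (ne_of_mem_erase hb)
    rw [← add_sum_erase _ _ (mem_univ a), ← add_sum_erase _ _ (mem_univ a), hrest] at hsum
    exact add_right_cancel hsum
  · exact hne a ha

theorem eq_of_sum_eq_of_eq_off_cross {ι κ R : Type*} [Fintype ι] [Fintype κ] [DecidableEq ι]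
    [DecidableEq κ] [AddCommGroup R] {A B : ι → κ → R} (i₀ : ι) (j₀ : κ)
    (hoff : ∀ i ≠ i₀, ∀ j ≠ j₀, A i j = B i j)
    (hrow : ∀ i ≠ i₀, ∑ j, A i j = ∑ j, B i j) (hcol : ∀ j ≠ j₀, ∑ i, A i j = ∑ i, B i j)
    (htot : ∑ i, ∑ j, A i j = ∑ i, ∑ j, B i j) : A = B := by
  have hrows : ∀ i ≠ i₀, A i = B i := fun i hi =>
    Fintype.eq_of_sum_eq_of_forall_ne j₀ (hrow i hi) (hoff i hi)
  have hrow₀ : ∀ j ≠ j₀, A i₀ j = B i₀ j := fun j hj =>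
    congrFun (Fintype.eq_of_sum_eq_of_forall_ne (u := (A · j)) i₀ (hcol j hj)
      fun i hi => hoff i hi j hj) i₀
  have hsum₀ : ∑ j, A i₀ j = ∑ j, B i₀ j :=
    congrFun (Fintype.eq_of_sum_eq_of_forall_ne (u := fun i => ∑ j, A i j) i₀ htot
      fun i hi => by rw [hrows i hi]) i₀
  funext i
  by_cases hi : i = i₀
  · subst hi
    exact Fintype.eq_of_sum_eq_of_forall_ne j₀ hsum₀ hrow₀
  · exact hrows i hi

section Transitions

variable {G H : Type*} [Group G] [Fintype G] [DecidableEq H]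

def transitionCount (f : G → H) (z : G) (i j : H) : ℕ := #{x | f x = i ∧ f (x * z) = j}

variable [Fintype H]

theorem sum_transitionCount_right (f : G → H) (z : G) (i : H) :
    ∑ j, transitionCount f z i j = #{x | f x = i} := by
  rw [card_eq_sum_card_fiberwise (f := fun x => f (x * z)) (t := univ) fun _ _ => mem_univ _]
  simp only [transitionCount, filter_filter]

theorem sum_transitionCount_left (f : G → H) (z : G) (j : H) :
    ∑ i, transitionCount f z i j = #{x | f x = j} := by
  have htranslate : #{x | f (x * z) = j} = #{x | f x = j} :=
    card_equiv (Equiv.mulRight z) (by simp)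
  rw [← htranslate, card_eq_sum_card_fiberwise (f := f) (t := univ) fun _ _ => mem_univ _]
  simp only [transitionCount, filter_filter, and_comm]

theorem sum_sum_transitionCount (f : G → H) (z : G) :
    ∑ i, ∑ j, transitionCount f z i j = Fintype.card G := by
  simp only [sum_transitionCount_right]
  rw [← card_univ, card_eq_sum_card_fiberwise (f := f) (t := univ) fun _ _ => mem_univ _]

theorem natCard_mul_inv_eq [Group H] (f : G → H) (z : G) (b : H) :
    Nat.card {x : G | f (x * z) * (f x)⁻¹ = b} = ∑ i, transitionCount f z i (b * i) := by
  rw [Nat.card_eq_fintype_card, ← Set.toFinset_card,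
    card_eq_sum_card_fiberwise (f := f) (t := univ) fun _ _ => mem_univ _]
  refine sum_congr rfl fun i _ => congrArg card ?_
  ext x
  simp only [Set.mem_toFinset, Set.mem_ofPred_eq, mem_filter, mem_univ, true_and,
    mul_inv_eq_iff_eq_mul]
  constructor
  · rintro ⟨hb, rfl⟩
    exact ⟨rfl, hb⟩
  · rintro ⟨rfl, hb⟩
    exact ⟨hb, rfl⟩

end Transitions

section SpreadTransition

variable {H : Type*} [Group H] [Fintype H] [DecidableEq H]

/-- The transition counts of a partial spread function, with `q = |H|` and `c i` the number of
members of `Σ_i` containing `z` for `i ≠ 1`; `c 1` is normalised so that `∑ i, c i = 0`, which is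
what lets the row and the column of `1` follow the same formula. -/
def spreadTransition (N : ℤ) (c : H → ℤ) (i j : H) : ℤ :=
  N ^ 2 - N * c i - N * c j + (if i = j then Fintype.card H * N * c i - N else 0) +
    if i = 1 ∧ j = 1 then Fintype.card H * N else 0

theorem spreadTransition_comm (N : ℤ) (c : H → ℤ) (i j : H) :
    spreadTransition N c i j = spreadTransition N c j i := by
  unfold spreadTransition
  split_ifs <;> grind

theorem sum_spreadTransition_right {N : ℤ} {c : H → ℤ} (hc : ∑ i, c i = 0) (i : H) :
    ∑ j, spreadTransition N c i j =
      Fintype.card H * N ^ 2 - N + if i = 1 then Fintype.card H * N else 0 := by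
  simp only [spreadTransition, sum_add_distrib, sum_sub_distrib, sum_const, card_univ,
    nsmul_eq_mul, ← mul_sum, hc, mul_zero, sub_zero, sum_ite_eq, mem_univ, if_true, ite_and,
    sum_ite_irrel, sum_ite_eq']
  split_ifs <;> ring

theorem sum_sum_spreadTransition {N : ℤ} {c : H → ℤ} (hc : ∑ i, c i = 0) :
    ∑ i, ∑ j, spreadTransition N c i j = (Fintype.card H * N) ^ 2 := by
  simp only [sum_spreadTransition_right hc, sum_add_distrib, sum_sub_distrib, sum_const, card_univ,
    nsmul_eq_mul, sum_ite_eq', mem_univ, if_true]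
  ring

theorem sum_spreadTransition_mul_left {N : ℤ} {c : H → ℤ} (hc : ∑ i, c i = 0) (b : H) :
    ∑ i, spreadTransition N c i (b * i) = Fintype.card H * N ^ 2 := by
  have hcb : ∑ i, c (b * i) = 0 := (Equiv.sum_comp (Equiv.mulLeft b) c).trans hc
  by_cases hb : b = 1 <;>
    simp [spreadTransition, sum_add_distrib, sum_sub_distrib, ← mul_sum, hc, hcb, hb, ite_and]

variable {G : Type*} [Group G] [Fintype G]

theorem natCard_mul_inv_eq_of_transitionCount {f : G → H} {z : G} {N : ℤ} {c : H → ℤ}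
    (hc : ∑ i, c i = 0) (hG : (Fintype.card G : ℤ) = (Fintype.card H * N) ^ 2)
    (hfibre : ∀ i ≠ 1, (#{x | f x = i} : ℤ) = Fintype.card H * N ^ 2 - N)
    (hcell : ∀ i ≠ 1, ∀ j ≠ 1, (transitionCount f z i j : ℤ) = spreadTransition N c i j)
    (b : H) :
    (Nat.card {x : G | f (x * z) * (f x)⁻¹ = b} : ℤ) = Fintype.card H * N ^ 2 := by
  have hmatrix : (fun i j => (transitionCount f z i j : ℤ)) = spreadTransition N c := by
    refine eq_of_sum_eq_of_eq_off_cross 1 1 hcell (fun i hi => ?_) (fun j hj => ?_) ?_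
    · rw [← Nat.cast_sum, sum_transitionCount_right, hfibre i hi, sum_spreadTransition_right hc,
        if_neg hi, add_zero]
    · simp only [spreadTransition_comm N c _ j]
      rw [← Nat.cast_sum, sum_transitionCount_left, hfibre j hj, sum_spreadTransition_right hc,
        if_neg hj, add_zero]
    · simp only [← Nat.cast_sum, sum_sum_transitionCount, sum_sum_spreadTransition hc, hG]
  rw [natCard_mul_inv_eq, Nat.cast_sum, ← sum_spreadTransition_mul_left hc b]
  exact sum_congr rfl fun i _ => congrFun (congrFun hmatrix i) (b * i)

end SpreadTransition

theorem bent_of_partial_spread_general {G H : Type*} [Group G] [Fintype G] [Group H] [Fintype H]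
    (q N : ℕ)
    (hG : Fintype.card G = (q * N) ^ 2) (hH : Fintype.card H = q)
    (S : H → Finset (Subgroup G))
    (hScard : ∀ i : H, i ≠ 1 → (S i).card = N)
    (hSdisj : ∀ i j : H, i ≠ 1 → j ≠ 1 → i ≠ j → Disjoint (S i) (S j))
    (hSorder : ∀ i : H, i ≠ 1 → ∀ X ∈ S i, Nat.card X = q * N)
    (hSint : ∀ i j : H, i ≠ 1 → j ≠ 1 → ∀ X ∈ S i, ∀ Y ∈ S j, X ≠ Y → X ⊓ Y = ⊥)
    (D : H → Set G)
    (hD : ∀ i : H, i ≠ 1 → D i = (⋃ X ∈ S i, (X : Set G)) \ {1})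
    (hD1 : D 1 = Set.univ \ ⋃ i ∈ {i : H | i ≠ 1}, D i)
    (f : G → H)
    (hf : ∀ i : H, ∀ x ∈ D i, f x = i) :
    ∀ z : G, z ≠ 1 → ∀ b : H,
      Nat.card {x : G | f (x * z) * (f x)⁻¹ = b} = q * N ^ 2 := by
  classical
  subst hH
  intro z hz b
  have hfD : ∀ i x, f x = i ↔ x ∈ D i := by
    refine fun i x => ⟨fun hx => ?_, hf i x⟩
    by_cases hcov : x ∈ ⋃ k ∈ {k : H | k ≠ 1}, D k
    · obtain ⟨k, -, hxk⟩ := Set.mem_iUnion₂.mp hcov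
      rwa [← hx, hf k x hxk]
    · have hx1 : x ∈ D 1 := hD1 ▸ ⟨trivial, hcov⟩
      rwa [← hx, hf 1 x hx1]
  let a : H → ℤ := fun i => #{X ∈ S i | z ∈ X}
  let c : H → ℤ := fun i => a i - if i = 1 then ∑ k, a k else 0
  have hc : ∑ i, c i = 0 := by simp [c, sum_sub_distrib]
  suffices (Nat.card {x : G | f (x * z) * (f x)⁻¹ = b} : ℤ) = Fintype.card H * N ^ 2 by
    exact_mod_cast this
  refine natCard_mul_inv_eq_of_transitionCount hc (by exact_mod_cast hG) (fun i hi => ?_)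
    (fun i hi j hj => ?_) b
  · simp only [hfD, hD i hi]
    rw [card_mem_punctured_iUnion (hSorder i hi) (hSint i i hi hi), hScard i hi]
    push_cast
    ring
  · simp only [transitionCount, hfD, hD i hi, hD j hj]
    rw [card_mem_punctured_iUnion_and_mul_mem hz (by rw [Nat.card_eq_fintype_card, hG])
      (hSorder i hi) (hSorder j hj) (hSint i i hi hi) (hSint j j hj hj) (hSint i j hi hj)]
    by_cases hij : i = j
    · subst hij
      simp only [inter_self, hScard i hi, spreadTransition, c, a, hi, if_true, if_false,
        and_self]
      push_cast
      ring
    · simp only [disjoint_iff_inter_eq_empty.mp (hSdisj i j hi hj hij), filter_empty,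
        card_empty, hScard i hi, hScard j hj, spreadTransition, c, a, hi, hj, hij, if_false,
        and_self]
      push_cast
      ring

/-- Theorem (nonabelian partial spread bent functions): in a group `G` of order `(qN)²`,
given a set `Σ` of `(q-1)N` subgroups of order `qN` pairwise intersecting in `1`,
partitioned into subsets `Σ i` of size `N` indexed by `i ∈ H \ {1}` where `|H| = q`,
the function `f` taking value `i` on `D i` is bent. -/
theorem bent_of_partial_spread {G H : Type*} [Group G] [Fintype G] [Group H] [Fintype H]
    (q N : ℕ) (hq : 2 ≤ q) (hN : 1 ≤ N)
    (hG : Fintype.card G = (q * N) ^ 2) (hH : Fintype.card H = q)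
    (S : H → Finset (Subgroup G))
    (hScard : ∀ i : H, i ≠ 1 → (S i).card = N)
    (hSdisj : ∀ i j : H, i ≠ 1 → j ≠ 1 → i ≠ j → Disjoint (S i) (S j))
    (hSorder : ∀ i : H, i ≠ 1 → ∀ X ∈ S i, Nat.card X = q * N)
    (hSint : ∀ i j : H, i ≠ 1 → j ≠ 1 → ∀ X ∈ S i, ∀ Y ∈ S j, X ≠ Y → X ⊓ Y = ⊥)
    (D : H → Set G)
    (hD : ∀ i : H, i ≠ 1 → D i = (⋃ X ∈ S i, (X : Set G)) \ {1})
    (hD1 : D 1 = Set.univ \ ⋃ i ∈ {i : H | i ≠ 1}, D i)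
    (f : G → H)
    (hf : ∀ i : H, ∀ x ∈ D i, f x = i) :
    ∀ z : G, z ≠ 1 → ∀ b : H,
      Nat.card {x : G | f (x * z) * (f x)⁻¹ = b} = q * N ^ 2 :=
  bent_of_partial_spread_general q N hG hH S hScard hSdisj hSorder hSint D hD hD1 f hf
end

section
/- Let q ≥ 2 and N ≥ 1 be integers, let G be a finite group of order (qN)², and let H be a finite group of order q with identity 1. Let Σ be a set of (q−1)N subgroups of G, each of order qN, any two distinct members intersecting in {1}; let Σ be partitioned into sets Σ_i of size N indexed by i ∈ H∖{1}; let D_i := (⋃ Σ_i) ∖ {1} for i ≠ 1 and D_1 := G ∖ ⋃_{i≠1} D_i. Fix z ∈ G with z ≠ 1 and let k ∈ H be the unique element with z ∈ D_k. Then for all i, j ∈ H∖{1} with i ≠ j, one has |(D_i·z⁻¹) ∩ D_j| = (N − δ_{ik})·(N − δ_{jk}), where δ_{ik} = 1 if i = k and δ_{ik} = 0 otherwise, and similarly for δ_{jk}. Here D_i·z⁻¹ := {d·z⁻¹ : d ∈ D_i}. -/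
/-- If `X` and `Y` are subgroups with trivial intersection whose orders multiply to `|G|`,
then every element has a unique factorization `g = x * p⁻¹`... more precisely, for each `z`
there is a unique `p ∈ Y` with `p * z ∈ X`. -/
lemma exists_unique_fac {G : Type*} [Group G] [Fintype G] (X Y : Subgroup G)
    (hcard : Nat.card X * Nat.card Y = Fintype.card G) (hbot : X ⊓ Y = ⊥) (z : G) :
    ∃! p : G, p ∈ Y ∧ p * z ∈ X := by
  have hinj : Function.Injective (fun pr : X × Y => (pr.1 : G) * pr.2) := by
    rintro ⟨x₁, y₁⟩ ⟨x₂, y₂⟩ h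
    simp only at h
    have h' : (x₂ : G)⁻¹ * x₁ = (y₂ : G) * (y₁ : G)⁻¹ := by
      have h2 : (x₂ : G)⁻¹ * ((x₁ : G) * y₁) * (y₁ : G)⁻¹
          = (x₂ : G)⁻¹ * ((x₂ : G) * y₂) * (y₁ : G)⁻¹ := by rw [h]
      simpa [mul_assoc] using h2
    have hmem : (x₂ : G)⁻¹ * x₁ ∈ X ⊓ Y := by
      refine ⟨X.mul_mem (X.inv_mem x₂.2) x₁.2, ?_⟩
      rw [h']; exact Y.mul_mem y₂.2 (Y.inv_mem y₁.2)
    rw [hbot, Subgroup.mem_bot] at hmem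
    have hx : (x₂ : G) = x₁ := inv_mul_eq_one.1 hmem
    have hy : (y₂ : G) = y₁ := mul_inv_eq_one.1 (by rw [← h', hmem])
    exact Prod.ext (Subtype.ext hx.symm) (Subtype.ext hy.symm)
  have hb : Function.Bijective (fun pr : X × Y => (pr.1 : G) * pr.2) := by
    rw [Nat.bijective_iff_injective_and_card]
    refine ⟨hinj, ?_⟩
    simp [Nat.card_prod, hcard, Nat.card_eq_fintype_card]
  obtain ⟨⟨x, y⟩, hxy⟩ := hb.2 z⁻¹
  simp only at hxy
  refine ⟨(y : G), ⟨y.2, ?_⟩, ?_⟩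
  · have hyz : (y : G) * z = (x : G)⁻¹ := by
      have : (x : G)⁻¹ * ((x : G) * y) * z = (x : G)⁻¹ * z⁻¹ * z := by rw [hxy]
      calc (y : G) * z = (x : G)⁻¹ * ((x : G) * y) * z := by group
        _ = (x : G)⁻¹ * z⁻¹ * z := this
        _ = (x : G)⁻¹ := by group
    rw [hyz]; exact X.inv_mem x.2
  · rintro p ⟨hpY, hpX⟩
    have hkey := hinj (a₁ := (⟨(p * z)⁻¹, X.inv_mem hpX⟩, ⟨p, hpY⟩)) (a₂ := (x, y))
      (by simp only; rw [hxy]; group)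
    have := congrArg Prod.snd hkey
    exact congrArg Subtype.val this

theorem card_Dij {G H : Type*} [Group G] [Fintype G] [Group H] [Fintype H] [DecidableEq H]
    (q N : ℕ) (hq : 2 ≤ q) (hN : 1 ≤ N)
    (hG : Fintype.card G = (q * N) ^ 2) (hH : Fintype.card H = q)
    (S : H → Finset (Subgroup G))
    (hScard : ∀ i : H, i ≠ 1 → (S i).card = N)
    (hSdisj : ∀ i j : H, i ≠ 1 → j ≠ 1 → i ≠ j → Disjoint (S i) (S j))
    (hSorder : ∀ i : H, i ≠ 1 → ∀ X ∈ S i, Nat.card X = q * N)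
    (hSint : ∀ i j : H, i ≠ 1 → j ≠ 1 → ∀ X ∈ S i, ∀ Y ∈ S j, X ≠ Y → X ⊓ Y = ⊥)
    (D : H → Set G)
    (hD : ∀ i : H, i ≠ 1 → D i = (⋃ X ∈ S i, (X : Set G)) \ {1})
    (hD1 : D 1 = Set.univ \ ⋃ i ∈ {i : H | i ≠ 1}, D i)
    (z : G) (hz : z ≠ 1) (k : H) (hk : z ∈ D k) :
    ∀ i j : H, i ≠ 1 → j ≠ 1 → i ≠ j →
      (((fun d => d * z⁻¹) '' D i ∩ D j).ncard : ℤ) =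
        ((N : ℤ) - if i = k then 1 else 0) * ((N : ℤ) - if j = k then 1 else 0) := by
  classical
  -- z lies in at most one subgroup from the whole family
  have huniq : ∀ a b : H, a ≠ 1 → b ≠ 1 → ∀ X ∈ S a, ∀ Y ∈ S b,
      z ∈ X → z ∈ Y → X = Y := by
    intro a b ha hb X hX Y hY hzX hzY
    by_contra hne
    have hb' := hSint a b ha hb X hX Y hY hne
    have : z ∈ X ⊓ Y := ⟨hzX, hzY⟩
    rw [hb', Subgroup.mem_bot] at this
    exact hz this
  -- counting the subgroups in S a avoiding z
  have hcount : ∀ a : H, a ≠ 1 →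
      (((S a).filter (fun X => z ∉ X)).card : ℤ) = (N : ℤ) - (if a = k then 1 else 0) := by
    intro a ha
    by_cases hak : a = k
    · subst hak
      rw [hD a ha] at hk
      obtain ⟨hkU, -⟩ := hk
      simp only [Set.mem_iUnion] at hkU
      obtain ⟨X₀, hX₀, hzX₀⟩ := hkU
      have hsing : (S a).filter (fun X => z ∈ X) = {X₀} := by
        apply Finset.eq_singleton_iff_unique_mem.2
        refine ⟨Finset.mem_filter.2 ⟨hX₀, hzX₀⟩, ?_⟩
        intro X hX
        rw [Finset.mem_filter] at hX
        exact huniq a a ha ha X hX.1 X₀ hX₀ hX.2 hzX₀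
      have hsub : {X₀} ⊆ S a := Finset.singleton_subset_iff.2 hX₀
      have hset : (S a).filter (fun X => z ∉ X) = S a \ {X₀} := by
        rw [Finset.filter_not, hsing]
      rw [hset, Finset.card_sdiff_of_subset hsub, Finset.card_singleton, hScard a ha,
        if_pos rfl, Nat.cast_sub hN]
      push_cast; ring
    · have hnone : ∀ X ∈ S a, z ∉ X := by
        intro X hX hzX
        by_cases hk1 : k = 1
        · rw [hk1, hD1] at hk
          apply hk.2
          refine Set.mem_iUnion₂.2 ⟨a, ha, ?_⟩
          rw [hD a ha]
          exact ⟨Set.mem_iUnion₂.2 ⟨X, hX, hzX⟩, hz⟩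
        · rw [hD k hk1] at hk
          obtain ⟨hkU, -⟩ := hk
          simp only [Set.mem_iUnion] at hkU
          obtain ⟨X₀, hX₀, hzX₀⟩ := hkU
          have hXX₀ : X = X₀ := huniq a k ha hk1 X hX X₀ hX₀ hzX hzX₀
          have hdisj := hSdisj a k ha hk1 hak
          exact (Finset.disjoint_left.1 hdisj) hX (hXX₀ ▸ hX₀)
      rw [Finset.filter_true_of_mem hnone, hScard a ha, if_neg hak]
      ring
  intro i j hi hj hij
  -- basic facts about pairs
  have hXY : ∀ X ∈ S i, ∀ Y ∈ S j, X ⊓ Y = ⊥ := by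
    intro X hX Y hY
    refine hSint i j hi hj X hX Y hY ?_
    rintro rfl
    exact (Finset.disjoint_left.1 (hSdisj i j hi hj hij)) hX hY
  have key : ∀ X ∈ S i, ∀ Y ∈ S j, ∃! p : G, p ∈ Y ∧ p * z ∈ X := by
    intro X hX Y hY
    refine exists_unique_fac X Y ?_ (hXY X hX Y hY) z
    rw [hSorder i hi X hX, hSorder j hj Y hY, hG, sq]
  -- the point function
  set f : Subgroup G → Subgroup G → G := fun X Y =>
    if h : ∃ p : G, p ∈ Y ∧ p * z ∈ X then h.choose else 1 with hfdef
  have hf : ∀ X ∈ S i, ∀ Y ∈ S j, (f X Y ∈ Y ∧ f X Y * z ∈ X) ∧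
      ∀ p : G, p ∈ Y → p * z ∈ X → p = f X Y := by
    intro X hX Y hY
    obtain ⟨p₀, hp₀, hun⟩ := key X hX Y hY
    have hex : ∃ p : G, p ∈ Y ∧ p * z ∈ X := ⟨p₀, hp₀⟩
    constructor
    · simp only [hfdef, dif_pos hex]
      exact hex.choose_spec
    · intro p h1 h2
      simp only [hfdef, dif_pos hex]
      rw [hun p ⟨h1, h2⟩, hun hex.choose hex.choose_spec]
  set Fi : Finset (Subgroup G) := (S i).filter (fun X => z ∉ X) with hFi
  set Fj : Finset (Subgroup G) := (S j).filter (fun X => z ∉ X) with hFj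
  -- the set equals the image of Fi ×ˢ Fj under f
  have hTset : (fun d => d * z⁻¹) '' D i ∩ D j
      = ↑((Fi ×ˢ Fj).image (fun pr => f pr.1 pr.2)) := by
    ext p
    simp only [Finset.coe_image, Set.mem_image, Finset.mem_coe, Finset.mem_product,
      Set.mem_inter_iff, Prod.exists]
    constructor
    · rintro ⟨⟨d, hdDi, rfl⟩, hpDj⟩
      have hdz : d * z⁻¹ * z = d := by group
      rw [hD i hi] at hdDi
      rw [hD j hj] at hpDj
      obtain ⟨hdU, hd1⟩ := hdDi
      obtain ⟨hpU, hp1⟩ := hpDj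
      simp only [Set.mem_iUnion, SetLike.mem_coe] at hdU hpU
      obtain ⟨X, hX, hdX⟩ := hdU
      obtain ⟨Y, hY, hpY⟩ := hpU
      simp only [Set.mem_singleton_iff] at hd1 hp1
      have hzX : z ∉ X := by
        intro hzX
        have hpX : d * z⁻¹ ∈ X := X.mul_mem hdX (X.inv_mem hzX)
        have : d * z⁻¹ ∈ X ⊓ Y := ⟨hpX, hpY⟩
        rw [hXY X hX Y hY, Subgroup.mem_bot] at this
        exact hp1 this
      have hzY : z ∉ Y := by
        intro hzY
        have hdY : d ∈ Y := by
          rw [← hdz]; exact Y.mul_mem hpY hzY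
        have : d ∈ X ⊓ Y := ⟨hdX, hdY⟩
        rw [hXY X hX Y hY, Subgroup.mem_bot] at this
        exact hd1 this
      refine ⟨X, Y, ⟨Finset.mem_filter.2 ⟨hX, hzX⟩, Finset.mem_filter.2 ⟨hY, hzY⟩⟩, ?_⟩
      exact ((hf X hX Y hY).2 (d * z⁻¹) hpY (by rw [hdz]; exact hdX)).symm
    · rintro ⟨X, Y, ⟨hXm, hYm⟩, rfl⟩
      obtain ⟨hX, hzX⟩ := Finset.mem_filter.1 hXm
      obtain ⟨hY, hzY⟩ := Finset.mem_filter.1 hYm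
      obtain ⟨⟨hpY, hpzX⟩, -⟩ := hf X hX Y hY
      have hp1 : f X Y ≠ 1 := by
        intro h1
        rw [h1, one_mul] at hpzX
        exact hzX hpzX
      have hpz1 : f X Y * z ≠ 1 := by
        intro h1
        have : f X Y = z⁻¹ := by
          calc f X Y = f X Y * z * z⁻¹ := by group
            _ = z⁻¹ := by rw [h1]; group
        rw [this] at hpY
        exact hzY ((Y.inv_mem_iff).1 hpY)
      constructor
      · refine ⟨f X Y * z, ?_, by group⟩
        rw [hD i hi]
        exact ⟨Set.mem_iUnion₂.2 ⟨X, hX, hpzX⟩, hpz1⟩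
      · rw [hD j hj]
        exact ⟨Set.mem_iUnion₂.2 ⟨Y, hY, hpY⟩, hp1⟩
  -- injectivity of f on Fi ×ˢ Fj
  have hinjOn : Set.InjOn (fun pr : Subgroup G × Subgroup G => f pr.1 pr.2)
      ↑(Fi ×ˢ Fj) := by
    rintro ⟨X, Y⟩ h1 ⟨X', Y'⟩ h2 heq
    simp only [Finset.coe_product, Set.mem_prod] at h1 h2
    obtain ⟨hX, hzX⟩ := Finset.mem_filter.1 h1.1
    obtain ⟨hY, hzY⟩ := Finset.mem_filter.1 h1.2
    obtain ⟨hX', hzX'⟩ := Finset.mem_filter.1 h2.1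
    obtain ⟨hY', hzY'⟩ := Finset.mem_filter.1 h2.2
    simp only at heq
    obtain ⟨⟨hpY, hpzX⟩, -⟩ := hf X hX Y hY
    obtain ⟨⟨hpY', hpzX'⟩, -⟩ := hf X' hX' Y' hY'
    rw [← heq] at hpY' hpzX'
    have hp1 : f X Y ≠ 1 := by
      intro h1'
      rw [h1', one_mul] at hpzX
      exact hzX hpzX
    have hpz1 : f X Y * z ≠ 1 := by
      intro h1'
      have : f X Y = z⁻¹ := by
        calc f X Y = f X Y * z * z⁻¹ := by group
          _ = z⁻¹ := by rw [h1']; group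
      rw [this] at hpY
      exact hzY ((Y.inv_mem_iff).1 hpY)
    have hYY' : Y = Y' := by
      by_contra hne
      have := hSint j j hj hj Y hY Y' hY' hne
      have hm : f X Y ∈ Y ⊓ Y' := ⟨hpY, hpY'⟩
      rw [this, Subgroup.mem_bot] at hm
      exact hp1 hm
    have hXX' : X = X' := by
      by_contra hne
      have := hSint i i hi hi X hX X' hX' hne
      have hm : f X Y * z ∈ X ⊓ X' := ⟨hpzX, hpzX'⟩
      rw [this, Subgroup.mem_bot] at hm
      exact hpz1 hm
    rw [Prod.ext_iff]
    exact ⟨hXX', hYY'⟩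
  rw [hTset, Set.ncard_coe_finset, Finset.card_image_of_injOn hinjOn,
    Finset.card_product]
  push_cast
  rw [hcount i hi, hcount j hj]
end

section
/- Let q ≥ 2 and N ≥ 1 be integers, let G be a finite group of order (qN)², and let H be a finite group of order q with identity 1. Let Σ be a set of (q−1)N subgroups of G, each of order qN, any two distinct members intersecting in {1}; let Σ be partitioned into sets Σ_i of size N indexed by i ∈ H∖{1}; let D_i := (⋃ Σ_i) ∖ {1} for i ≠ 1 and D_1 := G ∖ ⋃_{i≠1} D_i. Fix z ∈ G with z ≠ 1 and let k ∈ H be the unique element with z ∈ D_k. Then for every i ∈ H∖{1}, one has |(D_i·z⁻¹) ∩ D_i| = (N − δ_{ik})·(N − δ_{ik} − 1) + (qN − 2)·δ_{ik}, where δ_{ik} = 1 if i = k and 0 otherwise, and D_i·z⁻¹ := {d·z⁻¹ : d ∈ D_i}. -/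
theorem card_Dii {G H : Type*} [Group G] [Fintype G] [Group H] [Fintype H] [DecidableEq H]
    (q N : ℕ) (hq : 2 ≤ q) (hN : 1 ≤ N)
    (hG : Fintype.card G = (q * N) ^ 2) (hH : Fintype.card H = q)
    (S : H → Finset (Subgroup G))
    (hScard : ∀ i : H, i ≠ 1 → (S i).card = N)
    (hSdisj : ∀ i j : H, i ≠ 1 → j ≠ 1 → i ≠ j → Disjoint (S i) (S j))
    (hSorder : ∀ i : H, i ≠ 1 → ∀ X ∈ S i, Nat.card X = q * N)
    (hSint : ∀ i j : H, i ≠ 1 → j ≠ 1 → ∀ X ∈ S i, ∀ Y ∈ S j, X ≠ Y → X ⊓ Y = ⊥)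
    (D : H → Set G)
    (hD : ∀ i : H, i ≠ 1 → D i = (⋃ X ∈ S i, (X : Set G)) \ {1})
    (hD1 : D 1 = Set.univ \ ⋃ i ∈ {i : H | i ≠ 1}, D i)
    (z : G) (hz : z ≠ 1) (k : H) (hk : z ∈ D k) :
    ∀ i : H, i ≠ 1 →
      (((fun d => d * z⁻¹) '' D i ∩ D i).ncard : ℤ) =
        ((N : ℤ) - if i = k then 1 else 0) * ((N : ℤ) - (if i = k then 1 else 0) - 1)
          + ((q : ℤ) * N - 2) * (if i = k then 1 else 0) := by
  classical
  have hcardG : Nat.card G = (q * N) * (q * N) := by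
    rw [Nat.card_eq_fintype_card, hG]; ring
  have hmemD : ∀ (j : H), j ≠ 1 → ∀ w : G, w ∈ D j ↔ (∃ X ∈ S j, w ∈ X) ∧ w ≠ 1 := by
    intro j hj w
    rw [hD j hj]
    simp [Set.mem_diff]
  intro i hi
  -- triviality of pairwise intersections within S i
  have hint : ∀ X ∈ S i, ∀ Y ∈ S i, X ≠ Y → X ⊓ Y = ⊥ := fun X hX Y hY hne =>
    hSint i i hi hi X hX Y hY hne
  have hmul : ∀ X ∈ S i, ∀ Y ∈ S i, Nat.card X * Nat.card Y = Nat.card G := by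
    intro X hX Y hY
    rw [hSorder i hi X hX, hSorder i hi Y hY, hcardG]
  -- the cell finsets
  set T : Subgroup G → Subgroup G → Finset G :=
    fun X Y => Finset.univ.filter (fun w => w ∈ X ∧ w ≠ 1 ∧ w * z ∈ Y ∧ w * z ≠ 1) with hT
  have hsetT : ∀ X Y : Subgroup G, ∀ w : G,
      w ∈ T X Y ↔ w ∈ X ∧ w ≠ 1 ∧ w * z ∈ Y ∧ w * z ≠ 1 := by
    intro X Y w; simp [hT]
  -- decompose the set
  have hset : ((fun d => d * z⁻¹) '' D i ∩ D i)
      = ↑((S i).biUnion fun X => (S i).biUnion fun Y => T X Y) := by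
    ext w
    simp only [Set.mem_inter_iff, Set.mem_image, Finset.coe_biUnion, Set.mem_iUnion,
      Finset.mem_coe, hsetT]
    constructor
    · rintro ⟨⟨d, hd, rfl⟩, hw⟩
      obtain ⟨⟨X, hX, hwX⟩, hw1⟩ := (hmemD i hi _).1 hw
      obtain ⟨⟨Y, hY, hdY⟩, hd1⟩ := (hmemD i hi d).1 hd
      refine ⟨X, hX, Y, hY, hwX, hw1, ?_, ?_⟩
      · simpa [inv_mul_cancel_right] using hdY
      · simpa [inv_mul_cancel_right] using hd1
    · rintro ⟨X, hX, Y, hY, hwX, hw1, hwzY, hwz1⟩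
      refine ⟨⟨w * z, (hmemD i hi _).2 ⟨⟨Y, hY, hwzY⟩, hwz1⟩, by group⟩,
        (hmemD i hi w).2 ⟨⟨X, hX, hwX⟩, hw1⟩⟩
  -- disjointness for card_biUnion
  have hdisjX : ∀ X ∈ S i, ∀ X' ∈ S i, X ≠ X' →
      Disjoint ((S i).biUnion fun Y => T X Y) ((S i).biUnion fun Y => T X' Y) := by
    intro X hX X' hX' hne
    rw [Finset.disjoint_left]
    intro w hw hw'
    simp only [Finset.mem_biUnion] at hw hw'
    obtain ⟨Y, hY, hwT⟩ := hw
    obtain ⟨Y', hY', hwT'⟩ := hw'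
    obtain ⟨h1, h2, -, -⟩ := (hsetT X Y w).1 hwT
    obtain ⟨h1', -, -, -⟩ := (hsetT X' Y' w).1 hwT'
    have : w ∈ X ⊓ X' := ⟨h1, h1'⟩
    rw [hint X hX X' hX' hne] at this
    exact h2 (Subgroup.mem_bot.mp this)
  have hdisjY : ∀ X : Subgroup G, ∀ Y ∈ S i, ∀ Y' ∈ S i, Y ≠ Y' →
      Disjoint (T X Y) (T X Y') := by
    intro X Y hY Y' hY' hne
    rw [Finset.disjoint_left]
    intro w hw hw'
    obtain ⟨-, -, h3, h4⟩ := (hsetT X Y w).1 hw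
    obtain ⟨-, -, h3', -⟩ := (hsetT X Y' w).1 hw'
    have : w * z ∈ Y ⊓ Y' := ⟨h3, h3'⟩
    rw [hint Y hY Y' hY' hne] at this
    exact h4 (Subgroup.mem_bot.mp this)
  have hcard1 : (((S i).biUnion fun X => (S i).biUnion fun Y => T X Y).card : ℤ)
      = ∑ X ∈ S i, ∑ Y ∈ S i, ((T X Y).card : ℤ) := by
    rw [Finset.card_biUnion hdisjX]
    push_cast
    refine Finset.sum_congr rfl fun X hX => ?_
    rw [Finset.card_biUnion fun Y hY Y' hY' hne => hdisjY X Y hY Y' hY' hne]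
    push_cast
    rfl
  rw [hset, Set.ncard_coe_finset, hcard1]
  -- Cell computations
  have cellA : ∀ X ∈ S i, ∀ Y ∈ S i, X ≠ Y → z ∉ X → z ∉ Y → (T X Y).card = 1 := by
    intro X hX Y hY hne hzX hzY
    have hcompl : Subgroup.IsComplement' X Y :=
      Subgroup.isComplement'_of_card_mul_and_disjoint (hmul X hX Y hY)
        (disjoint_iff.mpr (hint X hX Y hY hne))
    obtain ⟨⟨x, y⟩, hxy, huniq⟩ := hcompl.existsUnique z
    simp only at hxy
    rw [Finset.card_eq_one]
    refine ⟨(x : G)⁻¹, ?_⟩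
    ext w
    rw [hsetT, Finset.mem_singleton]
    constructor
    · rintro ⟨hwX, hw1, hwzY, -⟩
      have h := huniq (⟨w⁻¹, inv_mem hwX⟩, ⟨w * z, hwzY⟩) (by simp [inv_mul_cancel_left])
      have h1 : (⟨w⁻¹, inv_mem hwX⟩ : X) = x := congrArg Prod.fst h
      have : w⁻¹ = (x : G) := congrArg Subtype.val h1
      rw [← this, inv_inv]
    · rintro rfl
      have hx1 : (x : G) ≠ 1 := by
        rintro h
        rw [h, one_mul] at hxy
        exact hzY (hxy ▸ y.2)
      refine ⟨inv_mem x.2, by simpa using hx1, ?_, ?_⟩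
      · have : (x : G)⁻¹ * z = y := by rw [← hxy, inv_mul_cancel_left]
        exact this ▸ y.2
      · intro h
        have : z = (x : G) := by
          have := congrArg (fun t => (x : G) * t) h
          simpa [mul_inv_cancel_left, mul_one] using this
        exact hzX (this ▸ x.2)
  have cellB : ∀ X : Subgroup G, z ∉ X → (T X X).card = 0 := by
    intro X hzX
    rw [Finset.card_eq_zero, Finset.eq_empty_iff_forall_notMem]
    intro w hw
    obtain ⟨h1, -, h3, -⟩ := (hsetT X X w).1 hw
    exact hzX (by simpa using mul_mem (inv_mem h1) h3)
  have cellC : ∀ X ∈ S i, z ∈ X → (T X X).card = q * N - 2 := by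
    intro X hX hzX
    have hXcard : (Finset.univ.filter (fun w => w ∈ X)).card = q * N := by
      rw [← Fintype.card_subtype, ← Nat.card_eq_fintype_card, hSorder i hi X hX]
    have hTXX : T X X = ((Finset.univ.filter (fun w => w ∈ X)).erase 1).erase z⁻¹ := by
      ext w
      rw [hsetT]
      simp only [Finset.mem_erase, Finset.mem_filter, Finset.mem_univ, true_and]
      constructor
      · rintro ⟨h1, h2, -, h4⟩
        exact ⟨fun h => h4 (by rw [h, inv_mul_cancel]), h2, h1⟩
      · rintro ⟨h1, h2, h3⟩
        exact ⟨h3, h2, mul_mem h3 hzX, fun h => h1 (mul_eq_one_iff_eq_inv.mp h)⟩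
    have hm1 : (1 : G) ∈ Finset.univ.filter (fun w => w ∈ X) := by
      simp [Finset.mem_filter, one_mem]
    have hm2 : z⁻¹ ∈ (Finset.univ.filter (fun w => w ∈ X)).erase 1 := by
      simp only [Finset.mem_erase, Finset.mem_filter, Finset.mem_univ, true_and]
      exact ⟨inv_ne_one.mpr hz, inv_mem hzX⟩
    rw [hTXX, Finset.card_erase_of_mem hm2, Finset.card_erase_of_mem hm1, hXcard]
    omega
  have cellD : ∀ X ∈ S i, ∀ Y ∈ S i, X ≠ Y → z ∈ X → (T X Y).card = 0 := by
    intro X hX Y hY hne hzX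
    rw [Finset.card_eq_zero, Finset.eq_empty_iff_forall_notMem]
    intro w hw
    obtain ⟨h1, -, h3, h4⟩ := (hsetT X Y w).1 hw
    have : w * z ∈ X ⊓ Y := ⟨mul_mem h1 hzX, h3⟩
    rw [hint X hX Y hY hne] at this
    exact h4 (Subgroup.mem_bot.mp this)
  have cellE : ∀ X ∈ S i, ∀ Y ∈ S i, X ≠ Y → z ∈ Y → (T X Y).card = 0 := by
    intro X hX Y hY hne hzY
    rw [Finset.card_eq_zero, Finset.eq_empty_iff_forall_notMem]
    intro w hw
    obtain ⟨h1, h2, h3, -⟩ := (hsetT X Y w).1 hw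
    have : w ∈ X ⊓ Y := ⟨h1, by simpa using mul_mem h3 (inv_mem hzY)⟩
    rw [hint X hX Y hY hne] at this
    exact h2 (Subgroup.mem_bot.mp this)
  -- Now evaluate the double sum in the two cases
  by_cases hik : i = k
  · -- i = k : z lies in a unique X₀ ∈ S i
    subst hik
    obtain ⟨⟨X0, hX0, hzX0⟩, -⟩ := (hmemD i hi z).1 hk
    have huniqX0 : ∀ X ∈ S i, z ∈ X → X = X0 := by
      intro X hX hzX
      by_contra hne
      have : z ∈ X ⊓ X0 := ⟨hzX, hzX0⟩
      rw [hint X hX X0 hX0 hne] at this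
      exact hz (Subgroup.mem_bot.mp this)
    have hterm : ∀ X ∈ S i, ∀ Y ∈ S i, ((T X Y).card : ℤ)
        = if X = X0 then (if Y = X0 then (q : ℤ) * N - 2 else 0)
          else (if Y = X0 then 0 else if Y = X then 0 else 1) := by
      intro X hX Y hY
      by_cases h1 : X = X0
      · by_cases h2 : Y = X0
        · rw [if_pos h1, if_pos h2, h1, h2, cellC X0 hX0 hzX0]
          have h2q : 2 ≤ q * N := le_trans hq (Nat.le_mul_of_pos_right q hN)
          push_cast [Nat.cast_sub h2q]
          ring
        · rw [if_pos h1, if_neg h2,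
            cellD X hX Y hY (fun h => h2 (h ▸ h1)) (by rw [h1]; exact hzX0)]
          norm_num
      · rw [if_neg h1]
        have hzX : z ∉ X := fun h => h1 (huniqX0 X hX h)
        by_cases h2 : Y = X0
        · rw [if_pos h2, cellE X hX Y hY (fun h => h1 (h.trans h2)) (by rw [h2]; exact hzX0)]
          norm_num
        · rw [if_neg h2]
          have hzY : z ∉ Y := fun h => h2 (huniqX0 Y hY h)
          by_cases h3 : Y = X
          · rw [if_pos h3, h3, cellB X hzX]
            norm_num
          · rw [if_neg h3, cellA X hX Y hY (fun h => h3 h.symm) hzX hzY]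
            norm_num
    rw [Finset.sum_congr rfl fun X hX => Finset.sum_congr rfl fun Y hY => hterm X hX Y hY]
    have hinner : ∀ X ∈ S i,
        (∑ Y ∈ S i, if X = X0 then (if Y = X0 then (q : ℤ) * N - 2 else 0)
          else (if Y = X0 then 0 else if Y = X then 0 else 1))
        = if X = X0 then (q : ℤ) * N - 2 else (N : ℤ) - 2 := by
      intro X hX
      by_cases h1 : X = X0
      · simp only [if_pos h1]
        rw [Finset.sum_ite_eq' (S i) X0 (fun _ => (q : ℤ) * N - 2)]
        rw [if_pos hX0]
      · simp only [if_neg h1]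
        have : ∀ Y ∈ S i, (if Y = X0 then (0 : ℤ) else if Y = X then 0 else 1)
            = 1 - (if Y = X0 then 1 else 0) - (if Y = X then 1 else 0) := by
          intro Y hY
          by_cases h2 : Y = X0
          · rw [if_pos h2, if_pos h2, if_neg (by rw [h2]; exact fun h => h1 h.symm)]
            ring
          · by_cases h3 : Y = X <;> simp [h2, h3, h1]
        rw [Finset.sum_congr rfl this]
        rw [Finset.sum_sub_distrib, Finset.sum_sub_distrib, Finset.sum_const,
          Finset.sum_ite_eq' (S i) X0, Finset.sum_ite_eq' (S i) X, if_pos hX0, if_pos hX,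
          hScard i hi]
        push_cast
        ring
    rw [Finset.sum_congr rfl hinner]
    have : ∀ X ∈ S i, (if X = X0 then (q : ℤ) * N - 2 else (N : ℤ) - 2)
        = ((N : ℤ) - 2) + (if X = X0 then ((q : ℤ) * N - 2) - ((N : ℤ) - 2) else 0) := by
      intro X hX
      by_cases h1 : X = X0 <;> simp [h1]
    rw [Finset.sum_congr rfl this, Finset.sum_add_distrib, Finset.sum_const,
      Finset.sum_ite_eq' (S i) X0, if_pos hX0, hScard i hi]
    simp only [if_pos rfl]
    push_cast
    ring
  · -- i ≠ k : z lies in no member of S i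
    have hzS : ∀ X ∈ S i, z ∉ X := by
      intro X hX hzX
      by_cases hk1 : k = 1
      · subst hk1
        rw [hD1] at hk
        exact hk.2 (Set.mem_biUnion hi ((hmemD i hi z).2 ⟨⟨X, hX, hzX⟩, hz⟩))
      · obtain ⟨⟨X0, hX0, hzX0⟩, -⟩ := (hmemD k hk1 z).1 hk
        have hne : X ≠ X0 := by
          rintro rfl
          exact Finset.disjoint_left.mp (hSdisj i k hi hk1 hik) hX hX0
        have : z ∈ X ⊓ X0 := ⟨hzX, hzX0⟩
        rw [hSint i k hi hk1 X hX X0 hX0 hne] at this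
        exact hz (Subgroup.mem_bot.mp this)
    have hterm : ∀ X ∈ S i, ∀ Y ∈ S i, ((T X Y).card : ℤ)
        = 1 - (if Y = X then 1 else 0) := by
      intro X hX Y hY
      by_cases h1 : Y = X
      · subst h1
        rw [cellB Y (hzS Y hY), if_pos rfl]
        norm_num
      · rw [cellA X hX Y hY (fun h => h1 h.symm) (hzS X hX) (hzS Y hY), if_neg h1]
        norm_num
    rw [Finset.sum_congr rfl fun X hX => Finset.sum_congr rfl fun Y hY => hterm X hX Y hY]
    have hinner : ∀ X ∈ S i,
        (∑ Y ∈ S i, ((1 : ℤ) - if Y = X then 1 else 0)) = (N : ℤ) - 1 := by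
      intro X hX
      rw [Finset.sum_sub_distrib, Finset.sum_const, Finset.sum_ite_eq' (S i) X, if_pos hX,
        hScard i hi]
      push_cast
      ring
    rw [Finset.sum_congr rfl hinner, Finset.sum_const, hScard i hi]
    simp only [if_neg hik]
    push_cast
    ring
end

section
/- Let q ≥ 2 and N ≥ 1 be integers, let G be a finite group of order (qN)², and let H be a finite group of order q with identity 1. Let Σ be a set of (q−1)N subgroups of G, each of order qN, any two distinct members intersecting in {1}; let Σ be partitioned into sets Σ_i of size N indexed by i ∈ H∖{1}; let D_i := (⋃ Σ_i) ∖ {1} for i ≠ 1 and D_1 := G ∖ ⋃_{i≠1} D_i. Fix z ∈ G with z ≠ 1 and let k ∈ H be the unique element with z ∈ D_k. Then for every i ∈ H∖{1}: |(D_i·z⁻¹) ∩ D_1| = |(D_1·z⁻¹) ∩ D_i| = (N + 1 − δ_{1k})·(N − δ_{ik}) + δ_{ik}, where δ_{1k} = 1 if k = 1 and 0 otherwise, δ_{ik} = 1 if i = k and 0 otherwise, and D·z⁻¹ := {d·z⁻¹ : d ∈ D}. -/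
lemma my_ncard_biUnion {α ι : Type*} (t : Finset ι) (f : ι → Set α)
    (hfin : ∀ i ∈ t, (f i).Finite)
    (h : ∀ i ∈ t, ∀ j ∈ t, i ≠ j → Disjoint (f i) (f j)) :
    (⋃ i ∈ t, f i).ncard = ∑ i ∈ t, (f i).ncard := by
  classical
  induction t using Finset.induction_on with
  | empty => simp
  | @insert a s ha ih =>
    have hfin2 : (⋃ i ∈ s, f i).Finite := by
      rw [← Finset.set_biUnion_coe]
      exact Set.Finite.biUnion s.finite_toSet (fun i hi => hfin i (Finset.mem_insert_of_mem hi))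
    rw [Finset.set_biUnion_insert, Finset.sum_insert ha,
      Set.ncard_union_eq ?_ (hfin a (by simp)) hfin2,
      ih (fun i hi => hfin i (Finset.mem_insert_of_mem hi))
        (fun i hi j hj hij => h i (Finset.mem_insert_of_mem hi) j (Finset.mem_insert_of_mem hj) hij)]
    refine Set.disjoint_iff_forall_ne.mpr ?_
    rintro x hx y hy rfl
    simp only [Set.mem_iUnion] at hy
    obtain ⟨i, hi, hyi⟩ := hy
    exact Set.disjoint_iff_forall_ne.mp
      (h a (Finset.mem_insert_self a s) i (Finset.mem_insert_of_mem hi)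
        (fun e => ha (e ▸ hi))) hx hyi rfl

lemma my_unique {G : Type*} [Group G] [Finite G] (X Y : Subgroup G) (hXY : X ⊓ Y = ⊥)
    (hcard : Nat.card X * Nat.card Y = Nat.card G) (w : G) :
    ∃! d : G, d ∈ X ∧ d * w ∈ Y := by
  have key : ∀ (a : G), a ∈ X → a ∈ Y → a = 1 := by
    intro a haX haY
    have : a ∈ X ⊓ Y := ⟨haX, haY⟩
    rwa [hXY, Subgroup.mem_bot] at this
  have hinj : Function.Injective (fun p : X × Y => (p.1 : G)⁻¹ * (p.2 : G)) := by
    rintro ⟨x, y⟩ ⟨x', y'⟩ he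
    simp only at he
    have h0 : (x' : G) * ((x : G)⁻¹ * (y : G)) = y' := by rw [he]; group
    have h1 : (x' : G) * (x : G)⁻¹ = (y' : G) * (y : G)⁻¹ := by rw [← h0]; group
    have h2 : (x' : G) * (x : G)⁻¹ = 1 :=
      key _ (X.mul_mem x'.2 (X.inv_mem x.2)) (h1 ▸ Y.mul_mem y'.2 (Y.inv_mem y.2))
    have h3 : (y' : G) * (y : G)⁻¹ = 1 := h1 ▸ h2
    have hx : (x : G) = x' := (mul_inv_eq_one.mp h2).symm
    have hy : (y : G) = y' := (mul_inv_eq_one.mp h3).symm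
    ext <;> simp [hx, hy]
  have hbij : Function.Bijective (fun p : X × Y => (p.1 : G)⁻¹ * (p.2 : G)) := by
    rw [Nat.bijective_iff_injective_and_card]
    exact ⟨hinj, by rw [Nat.card_prod]; exact hcard⟩
  obtain ⟨⟨x, y⟩, hxy⟩ := hbij.surjective w
  simp only at hxy
  refine ⟨x, ⟨x.2, ?_⟩, ?_⟩
  · have : (x : G) * w = y := by rw [← hxy]; group
    rw [this]; exact y.2
  · rintro d ⟨hdX, hdY⟩
    have heq : (⟨⟨d, hdX⟩, ⟨d * w, hdY⟩⟩ : X × Y) = (x, y) := by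
      apply hinj
      simp only [hxy]
      group
    have := congrArg (fun p : X × Y => ((p.1 : G))) heq
    simpa using this

open scoped Classical in
lemma my_c_ne {G : Type*} [Group G] [Fintype G] (q N : ℕ) (X Y : Subgroup G) (hXY : X ⊓ Y = ⊥)
    (hX : Nat.card X = q * N) (hY : Nat.card Y = q * N) (hG : Fintype.card G = (q * N) ^ 2)
    (z : G) (hz : z ≠ 1) :
    (((X : Set G) \ {1}) ∩ (fun d => d * z⁻¹) ⁻¹' ((Y : Set G) \ {1})).ncard
      = if z ∈ X ∨ z ∈ Y then 0 else 1 := by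
  classical
  have hcard : Nat.card X * Nat.card Y = Nat.card G := by
    rw [hX, hY, Nat.card_eq_fintype_card, hG]; ring
  obtain ⟨d₀, ⟨hd₀X, hd₀Y⟩, huniq⟩ := my_unique X Y hXY hcard z⁻¹
  have hmem : ∀ d : G, d ∈ ((X : Set G) \ {1}) ∩ (fun d => d * z⁻¹) ⁻¹' ((Y : Set G) \ {1}) ↔
      (d ∈ X ∧ d * z⁻¹ ∈ Y) ∧ d ≠ 1 ∧ d * z⁻¹ ≠ 1 := by
    intro d
    simp only [Set.mem_inter_iff, Set.mem_diff, SetLike.mem_coe, Set.mem_singleton_iff,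
      Set.mem_preimage]
    tauto
  split_ifs with h
  · rw [Set.ncard_eq_zero (Set.toFinite _), Set.eq_empty_iff_forall_notMem]
    intro d hd
    rw [hmem] at hd
    obtain ⟨hd1, hd2, hd3⟩ := hd
    rcases h with h | h
    · have hdz : d = z := (huniq d hd1).trans (huniq z ⟨h, by simpa using one_mem Y⟩).symm
      exact hd3 (by rw [hdz]; group)
    · have h1 : (1 : G) = d₀ := huniq 1 ⟨one_mem X, by simpa using Y.inv_mem h⟩
      exact hd2 ((huniq d hd1).trans h1.symm)
  · push_neg at h
    have hd₀1 : d₀ ≠ 1 := by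
      rintro rfl
      exact h.2 (by simpa using Y.inv_mem_iff.mp (by simpa using hd₀Y))
    have hd₀2 : d₀ * z⁻¹ ≠ 1 := by
      intro he
      have : d₀ = z := mul_inv_eq_one.mp he
      exact h.1 (this ▸ hd₀X)
    have : ((X : Set G) \ {1}) ∩ (fun d => d * z⁻¹) ⁻¹' ((Y : Set G) \ {1}) = {d₀} := by
      ext d
      rw [hmem, Set.mem_singleton_iff]
      constructor
      · rintro ⟨hd1, _, _⟩; exact huniq d hd1
      · rintro rfl; exact ⟨⟨hd₀X, hd₀Y⟩, hd₀1, hd₀2⟩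
    rw [this, Set.ncard_singleton]

open scoped Classical in
lemma my_c_eq {G : Type*} [Group G] [Fintype G] (X : Subgroup G) (z : G) (hz : z ≠ 1) :
    (((X : Set G) \ {1}) ∩ (fun d => d * z⁻¹) ⁻¹' ((X : Set G) \ {1})).ncard
      = if z ∈ X then Nat.card X - 2 else 0 := by
  split_ifs with h
  · have hset : ((X : Set G) \ {1}) ∩ (fun d => d * z⁻¹) ⁻¹' ((X : Set G) \ {1})
        = (X : Set G) \ {1, z} := by
      ext d
      simp only [Set.mem_inter_iff, Set.mem_diff, SetLike.mem_coe, Set.mem_singleton_iff,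
        Set.mem_preimage, Set.mem_insert_iff]
      constructor
      · rintro ⟨⟨hdX, hd1⟩, hdz, hdz1⟩
        refine ⟨hdX, ?_⟩
        rintro (rfl | rfl)
        · exact hd1 rfl
        · exact hdz1 (by simp)
      · rintro ⟨hdX, hd⟩
        push_neg at hd
        exact ⟨⟨hdX, hd.1⟩, X.mul_mem hdX (X.inv_mem h), fun he => hd.2 (mul_inv_eq_one.mp he)⟩
    rw [hset, Set.ncard_diff (by rintro a (rfl | rfl) <;> simp [h, one_mem]) (Set.toFinite _),
      Set.ncard_pair (Ne.symm hz), ← Nat.card_coe_set_eq]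
    rfl
  · rw [Set.ncard_eq_zero (Set.toFinite _), Set.eq_empty_iff_forall_notMem]
    rintro d ⟨⟨hdX, _⟩, hdz, _⟩
    simp only [SetLike.mem_coe] at hdX hdz
    exact h (by simpa using X.mul_mem (X.inv_mem hdz) hdX)

theorem card_Di1 {G H : Type*} [Group G] [Fintype G] [Group H] [Fintype H] [DecidableEq H]
    (q N : ℕ) (hq : 2 ≤ q) (hN : 1 ≤ N)
    (hG : Fintype.card G = (q * N) ^ 2) (hH : Fintype.card H = q)
    (S : H → Finset (Subgroup G))
    (hScard : ∀ i : H, i ≠ 1 → (S i).card = N)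
    (hSdisj : ∀ i j : H, i ≠ 1 → j ≠ 1 → i ≠ j → Disjoint (S i) (S j))
    (hSorder : ∀ i : H, i ≠ 1 → ∀ X ∈ S i, Nat.card X = q * N)
    (hSint : ∀ i j : H, i ≠ 1 → j ≠ 1 → ∀ X ∈ S i, ∀ Y ∈ S j, X ≠ Y → X ⊓ Y = ⊥)
    (D : H → Set G)
    (hD : ∀ i : H, i ≠ 1 → D i = (⋃ X ∈ S i, (X : Set G)) \ {1})
    (hD1 : D 1 = Set.univ \ ⋃ i ∈ {i : H | i ≠ 1}, D i)
    (z : G) (hz : z ≠ 1) (k : H) (hk : z ∈ D k) :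
    ∀ i : H, i ≠ 1 →
      (((fun d => d * z⁻¹) '' D i ∩ D 1).ncard : ℤ) =
          ((N : ℤ) + 1 - if k = 1 then 1 else 0) * ((N : ℤ) - if i = k then 1 else 0)
            + (if i = k then 1 else 0) ∧
      (((fun d => d * z⁻¹) '' D 1 ∩ D i).ncard : ℤ) =
          ((N : ℤ) + 1 - if k = 1 then 1 else 0) * ((N : ℤ) - if i = k then 1 else 0)
            + (if i = k then 1 else 0) := by
  classical
  have hqN2 : 2 ≤ q * N := le_trans hq (Nat.le_mul_of_pos_right q (by omega))
  -- alternative description of D j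
  have hDalt : ∀ j : H, j ≠ 1 → D j = ⋃ X ∈ S j, ((X : Set G) \ {1}) := by
    intro j hj
    rw [hD j hj]
    ext x
    simp only [Set.mem_diff, Set.mem_iUnion, Set.mem_singleton_iff, SetLike.mem_coe]
    tauto
  have hmemDof : ∀ j : H, j ≠ 1 → ∀ X ∈ S j, ∀ x : G, x ∈ X → x ≠ 1 → x ∈ D j := by
    intro j hj X hX x hxX hx1
    rw [hDalt j hj]
    exact Set.mem_biUnion hX ⟨hxX, hx1⟩
  have hMemD : ∀ j : H, j ≠ 1 → ∀ x : G, x ∈ D j → x ≠ 1 ∧ ∃ X ∈ S j, x ∈ X := by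
    intro j hj x hx
    rw [hDalt j hj] at hx
    simp only [Set.mem_iUnion, Set.mem_diff, Set.mem_singleton_iff, SetLike.mem_coe] at hx
    obtain ⟨X, hX, hxX, hx1⟩ := hx
    exact ⟨hx1, X, hX, hxX⟩
  have hD1mem : ∀ x : G, x ∈ D 1 ↔ ∀ j : H, j ≠ 1 → x ∉ D j := by
    intro x
    rw [hD1]
    simp
  have hDdisj : ∀ j j' : H, j ≠ 1 → j' ≠ 1 → j ≠ j' → ∀ x : G, x ∈ D j → x ∈ D j' → False := by
    intro j j' hj hj' hjj' x hxj hxj'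
    obtain ⟨hx1, X, hX, hxX⟩ := hMemD j hj x hxj
    obtain ⟨-, Y, hY, hxY⟩ := hMemD j' hj' x hxj'
    have hXY : X ≠ Y := by
      rintro rfl
      exact (Finset.disjoint_left.mp (hSdisj j j' hj hj' hjj')) hX hY
    have hb := hSint j j' hj hj' X hX Y hY hXY
    have hx : x ∈ X ⊓ Y := ⟨hxX, hxY⟩
    rw [hb, Subgroup.mem_bot] at hx
    exact hx1 hx
  have hclass : ∀ x : G, ∃! j : H, x ∈ D j := by
    intro x
    by_cases hex : ∃ j, j ≠ 1 ∧ x ∈ D j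
    · obtain ⟨j, hj, hxj⟩ := hex
      refine ⟨j, hxj, fun j' hxj' => ?_⟩
      by_cases hj' : j' = 1
      · exact absurd hxj ((hD1mem x).mp (hj' ▸ hxj') j hj)
      · by_contra hne
        exact hDdisj j' j hj' hj hne x hxj' hxj
    · push_neg at hex
      refine ⟨1, (hD1mem x).mpr (fun j hj hxj => hex j hj hxj), fun j' hxj' => ?_⟩
      by_contra hj'
      exact hex j' hj' hxj'
  have hDdisjAll : ∀ j j' : H, j ≠ j' → Disjoint (D j) (D j') := by
    intro j j' hjj'
    rw [Set.disjoint_left]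
    intro x hxj hxj'
    obtain ⟨c, -, hu⟩ := hclass x
    exact hjj' ((hu j hxj).trans (hu j' hxj').symm)
  have hPdisj : ∀ (X Y : Subgroup G), X ⊓ Y = ⊥ →
      Disjoint ((X : Set G) \ {1}) ((Y : Set G) \ {1}) := by
    intro X Y hXY
    rw [Set.disjoint_left]
    rintro x ⟨hxX, hx1⟩ ⟨hxY, -⟩
    have hx : x ∈ X ⊓ Y := ⟨hxX, hxY⟩
    rw [hXY, Subgroup.mem_bot] at hx
    exact hx1 hx
  -- cardinality of D j
  have hterm : ∀ j : H, j ≠ 1 → ∀ X ∈ S j, ((X : Set G) \ {1}).ncard = q * N - 1 := by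
    intro j hj X hX
    have h1 : ((X : Set G)).ncard = q * N := by
      rw [← Nat.card_coe_set_eq]
      exact hSorder j hj X hX
    rw [Set.ncard_diff (by simp [one_mem]) (Set.toFinite _), h1, Set.ncard_singleton]
  have hcardD : ∀ j : H, j ≠ 1 → (D j).ncard = N * (q * N - 1) := by
    intro j hj
    rw [hDalt j hj, my_ncard_biUnion (S j) _ (fun X _ => Set.toFinite _)
      (fun X hX Y hY hXY => hPdisj X Y (hSint j j hj hj X hX Y hY hXY))]
    rw [Finset.sum_congr rfl (fun X hX => hterm j hj X hX), Finset.sum_const, hScard j hj,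
      smul_eq_mul]
  -- preimage cardinality
  have hpre : ∀ B : Set G, ((fun d : G => d * z⁻¹) ⁻¹' B).ncard = B.ncard := by
    intro B
    have heq : (fun d : G => d * z⁻¹) ⁻¹' B = (fun d : G => d * z) '' B := by
      ext x
      simp only [Set.mem_preimage, Set.mem_image]
      constructor
      · intro h; exact ⟨x * z⁻¹, h, by group⟩
      · rintro ⟨b, hb, rfl⟩; simpa using hb
    rw [heq, Set.ncard_image_of_injective _ (mul_left_injective z)]
  have himg : ∀ A B : Set G, ((fun d : G => d * z⁻¹) '' A ∩ B).ncard
      = (A ∩ (fun d : G => d * z⁻¹) ⁻¹' B).ncard := by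
    intro A B
    have h1 : (fun d : G => d * z⁻¹) '' A ∩ B
        = (fun d : G => d * z⁻¹) '' (A ∩ (fun d : G => d * z⁻¹) ⁻¹' B) := by
      ext x
      simp only [Set.mem_inter_iff, Set.mem_image, Set.mem_preimage]
      constructor
      · rintro ⟨⟨a, ha, rfl⟩, hb⟩
        exact ⟨a, ⟨ha, hb⟩, rfl⟩
      · rintro ⟨a, ⟨ha, hb⟩, rfl⟩
        exact ⟨⟨a, ha, rfl⟩, hb⟩
    rw [h1, Set.ncard_image_of_injective _ (mul_left_injective z⁻¹)]
  -- partition sums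
  have hsplitA : ∀ A : Set G,
      ∑ j : H, (A ∩ (fun d : G => d * z⁻¹) ⁻¹' (D j)).ncard = A.ncard := by
    intro A
    have hu : ⋃ j ∈ (Finset.univ : Finset H),
        (A ∩ (fun d : G => d * z⁻¹) ⁻¹' (D j)) = A := by
      ext x
      simp only [Set.mem_iUnion, Set.mem_inter_iff, Set.mem_preimage, exists_prop,
        Finset.mem_univ, true_and]
      constructor
      · rintro ⟨j, hj, -⟩; exact hj
      · intro hx
        obtain ⟨j, hj, -⟩ := hclass (x * z⁻¹)
        exact ⟨j, hx, hj⟩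
    calc ∑ j : H, (A ∩ (fun d : G => d * z⁻¹) ⁻¹' (D j)).ncard
        = (⋃ j ∈ (Finset.univ : Finset H), (A ∩ (fun d : G => d * z⁻¹) ⁻¹' (D j))).ncard := by
          rw [my_ncard_biUnion _ _ (fun _ _ => Set.toFinite _)
            (fun j _ j' _ hne => ((hDdisjAll j j' hne).preimage _).mono
              Set.inter_subset_right Set.inter_subset_right)]
      _ = A.ncard := by rw [hu]
  have hsplitB : ∀ B : Set G,
      ∑ j : H, ((D j) ∩ (fun d : G => d * z⁻¹) ⁻¹' B).ncard
        = ((fun d : G => d * z⁻¹) ⁻¹' B).ncard := by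
    intro B
    have hu : ⋃ j ∈ (Finset.univ : Finset H),
        ((D j) ∩ (fun d : G => d * z⁻¹) ⁻¹' B) = (fun d : G => d * z⁻¹) ⁻¹' B := by
      ext x
      simp only [Set.mem_iUnion, Set.mem_inter_iff, Set.mem_preimage, exists_prop,
        Finset.mem_univ, true_and]
      constructor
      · rintro ⟨j, -, hj⟩; exact hj
      · intro hx
        obtain ⟨j, hj, -⟩ := hclass x
        exact ⟨j, hj, hx⟩
    calc ∑ j : H, ((D j) ∩ (fun d : G => d * z⁻¹) ⁻¹' B).ncard
        = (⋃ j ∈ (Finset.univ : Finset H), ((D j) ∩ (fun d : G => d * z⁻¹) ⁻¹' B)).ncard := by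
          rw [my_ncard_biUnion _ _ (fun _ _ => Set.toFinite _)
            (fun j _ j' _ hne => (hDdisjAll j j' hne).mono
              Set.inter_subset_left Set.inter_subset_left)]
      _ = ((fun d : G => d * z⁻¹) ⁻¹' B).ncard := by rw [hu]
  -- the z-counting function
  set μ : H → ℕ := fun j => ((S j).filter (fun X => z ∈ X)).card with hμdef
  have hμ : ∀ j : H, j ≠ 1 → μ j = if j = k ∧ k ≠ 1 then 1 else 0 := by
    intro j hj
    by_cases hk1 : k = 1
    · rw [if_neg (fun hc => hc.2 hk1)]
      rw [Finset.card_eq_zero, Finset.filter_eq_empty_iff]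
      intro X hX hzX2
      exact ((hD1mem z).mp (hk1 ▸ hk)) j hj (hmemDof j hj X hX z hzX2 hz)
    · obtain ⟨-, Z, hZk, hzZ⟩ := hMemD k hk1 z hk
      by_cases hjk : j = k
      · rw [if_pos ⟨hjk, hk1⟩, Finset.card_eq_one]
        refine ⟨Z, ?_⟩
        rw [Finset.eq_singleton_iff_unique_mem]
        constructor
        · rw [Finset.mem_filter]; exact ⟨hjk ▸ hZk, hzZ⟩
        · intro X hX
          rw [Finset.mem_filter] at hX
          by_contra hne
          have h0 := hSint j j hj hj X hX.1 Z (hjk ▸ hZk) hne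
          have hmem : z ∈ X ⊓ Z := ⟨hX.2, hzZ⟩
          rw [h0, Subgroup.mem_bot] at hmem
          exact hz hmem
      · rw [if_neg (fun hc => hjk hc.1), Finset.card_eq_zero, Finset.filter_eq_empty_iff]
        intro X hX hzmem
        exact hDdisj j k hj hk1 hjk z (hmemDof j hj X hX z hzmem hz) hk
  have hμ' : ∀ j : H, j ≠ 1 → (μ j : ℤ) = if j = k then 1 else 0 := by
    intro j hj
    rw [hμ j hj]
    by_cases hjk : j = k
    · by_cases hk1 : k = 1
      · exact absurd (hjk.trans hk1) hj
      · simp [hjk, hk1]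
    · simp [hjk]
  -- helper sums over S j
  have hsum1 : ∀ j : H, j ≠ 1 →
      ∑ X ∈ S j, (if z ∈ X then (0 : ℤ) else 1) = (N : ℤ) - μ j := by
    intro j hj
    have hc : ∀ X : Subgroup G, (if z ∈ X then (0 : ℤ) else 1)
        = 1 - (if z ∈ X then 1 else 0) := by
      intro X; split_ifs <;> ring
    rw [Finset.sum_congr rfl (fun X _ => hc X), Finset.sum_sub_distrib, Finset.sum_const,
      hScard j hj, Finset.sum_boole, nsmul_eq_mul, mul_one]
  have hsum2 : ∀ j : H, j ≠ 1 →
      ∑ X ∈ S j, (if z ∈ X then ((q : ℤ) * N - 2) else 0) = (μ j : ℤ) * ((q : ℤ) * N - 2) := by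
    intro j hj
    have hc : ∀ X : Subgroup G, (if z ∈ X then ((q : ℤ) * N - 2) else 0)
        = (if z ∈ X then (1 : ℤ) else 0) * ((q : ℤ) * N - 2) := by
      intro X; split_ifs <;> ring
    rw [Finset.sum_congr rfl (fun X _ => hc X), ← Finset.sum_mul, Finset.sum_boole]
  -- the key pair formula
  have hF : ∀ j j' : H, j ≠ 1 → j' ≠ 1 →
      ((D j ∩ (fun d : G => d * z⁻¹) ⁻¹' (D j')).ncard : ℤ)
        = ((N : ℤ) - μ j) * ((N : ℤ) - μ j')
          + (if j = j' then ((μ j : ℤ) * ((q : ℤ) * N - 2) - ((N : ℤ) - (μ j : ℤ))) else 0) := by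
    intro j j' hj hj'
    have hset : D j ∩ (fun d : G => d * z⁻¹) ⁻¹' (D j')
        = ⋃ p ∈ S j ×ˢ S j',
          (((p.1 : Set G) \ {1}) ∩ (fun d : G => d * z⁻¹) ⁻¹' ((p.2 : Set G) \ {1})) := by
      rw [hDalt j hj, hDalt j' hj']
      ext x
      simp only [Set.mem_inter_iff, Set.mem_iUnion, Set.mem_preimage, Finset.mem_product,
        Set.mem_diff, SetLike.mem_coe, Set.mem_singleton_iff]
      constructor
      · rintro ⟨⟨X, hX, hx⟩, ⟨Y, hY, hy⟩⟩
        exact ⟨(X, Y), ⟨hX, hY⟩, hx, hy⟩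
      · rintro ⟨⟨X, Y⟩, ⟨hX, hY⟩, hx, hy⟩
        exact ⟨⟨X, hX, hx⟩, ⟨Y, hY, hy⟩⟩
    rw [hset, my_ncard_biUnion _ _ (fun _ _ => Set.toFinite _) ?_]
    swap
    · rintro ⟨X, Y⟩ hXY ⟨X', Y'⟩ hXY' hne
      rw [Finset.mem_product] at hXY hXY'
      by_cases hXX : X = X'
      · have hYY : Y ≠ Y' := by
          rintro rfl; exact hne (by rw [hXX])
        have h0 := hSint j' j' hj' hj' Y hXY.2 Y' hXY'.2 hYY
        exact ((hPdisj Y Y' h0).preimage _).mono Set.inter_subset_right Set.inter_subset_right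
      · have h0 := hSint j j hj hj X hXY.1 X' hXY'.1 hXX
        exact (hPdisj X X' h0).mono Set.inter_subset_left Set.inter_subset_left
    push_cast
    rw [Finset.sum_product]
    have hval : ∀ X ∈ S j, ∀ Y ∈ S j',
        ((((X : Set G) \ {1}) ∩ (fun d : G => d * z⁻¹) ⁻¹' ((Y : Set G) \ {1})).ncard : ℤ)
          = (if z ∈ X then (0 : ℤ) else 1) * (if z ∈ Y then (0 : ℤ) else 1)
            + (if Y = X then ((if z ∈ X then ((q : ℤ) * N - 2) else 0)
                - (if z ∈ X then (0 : ℤ) else 1)) else 0) := by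
      intro X hX Y hY
      rcases eq_or_ne Y X with rfl | hne
      · rw [my_c_eq Y z hz, hSorder j' hj' Y hY]
        rw [if_pos rfl]
        split_ifs with h1
        · rw [Nat.cast_sub hqN2]
          push_cast
          ring
        · norm_num
      · have hb := hSint j j' hj hj' X hX Y hY (Ne.symm hne)
        rw [my_c_ne q N X Y hb (hSorder j hj X hX) (hSorder j' hj' Y hY) hG z hz]
        rw [if_neg hne]
        by_cases h1 : z ∈ X <;> by_cases h2 : z ∈ Y <;>
          simp [h1, h2]
    rw [Finset.sum_congr rfl (fun X hX => Finset.sum_congr rfl (fun Y hY => hval X hX Y hY))]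
    have hinner : ∀ X ∈ S j,
        ∑ Y ∈ S j', ((if z ∈ X then (0 : ℤ) else 1) * (if z ∈ Y then (0 : ℤ) else 1)
            + (if Y = X then ((if z ∈ X then ((q : ℤ) * N - 2) else 0)
                - (if z ∈ X then (0 : ℤ) else 1)) else 0))
          = (if z ∈ X then (0 : ℤ) else 1) * ((N : ℤ) - μ j')
            + (if X ∈ S j' then ((if z ∈ X then ((q : ℤ) * N - 2) else 0)
                - (if z ∈ X then (0 : ℤ) else 1)) else 0) := by
      intro X hX
      rw [Finset.sum_add_distrib, ← Finset.mul_sum, hsum1 j' hj', Finset.sum_ite_eq' (S j') X]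
    rw [Finset.sum_congr rfl hinner, Finset.sum_add_distrib, ← Finset.sum_mul, hsum1 j hj]
    congr 1
    by_cases hjj : j = j'
    · subst hjj
      rw [if_pos rfl]
      rw [Finset.sum_congr rfl (fun X hX => by rw [if_pos hX]), Finset.sum_sub_distrib,
        hsum1 j hj, hsum2 j hj]
    · rw [if_neg hjj]
      rw [Finset.sum_congr rfl (fun X hX => ?_), Finset.sum_const_zero]
      rw [if_neg (fun hmem => (Finset.disjoint_left.mp (hSdisj j j' hj hj' hjj)) hX hmem)]
  -- counting sums over H \ {1}
  have hcard_erase : (Finset.univ.erase (1 : H)).card = q - 1 := by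
    rw [Finset.card_erase_of_mem (Finset.mem_univ _), Finset.card_univ, hH]
  have hsumμ : ∑ j ∈ Finset.univ.erase (1 : H), (μ j : ℤ) = if k = 1 then 0 else 1 := by
    rw [Finset.sum_congr rfl (fun j hj => hμ' j (Finset.ne_of_mem_erase hj))]
    rw [Finset.sum_ite_eq' (Finset.univ.erase (1 : H)) k (fun _ => (1 : ℤ))]
    by_cases hk1 : k = 1
    · rw [if_neg (by simp [hk1]), if_pos hk1]
    · rw [if_pos (Finset.mem_erase.mpr ⟨hk1, Finset.mem_univ _⟩), if_neg hk1]
  have hsumN : ∑ j ∈ Finset.univ.erase (1 : H), ((N : ℤ) - μ j)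
      = ((q : ℤ) - 1) * N - (if k = 1 then 0 else 1) := by
    rw [Finset.sum_sub_distrib, Finset.sum_const, hcard_erase, hsumμ, nsmul_eq_mul,
      Nat.cast_sub (by omega : 1 ≤ q)]
    push_cast
    ring
  -- the cardinality of D i as integer
  intro i hi
  have hDiZ : ((D i).ncard : ℤ) = (N : ℤ) * ((q : ℤ) * N) - N := by
    rw [hcardD i hi, Nat.cast_mul, Nat.cast_sub (by omega : 1 ≤ q * N)]
    push_cast
    ring
  have hii : i ∈ Finset.univ.erase (1 : H) := Finset.mem_erase.mpr ⟨hi, Finset.mem_univ _⟩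
  -- the common value of the inner sums
  have hsumF1 : ∑ j ∈ Finset.univ.erase (1 : H),
      ((D i ∩ (fun d : G => d * z⁻¹) ⁻¹' (D j)).ncard : ℤ)
        = ((N : ℤ) - μ i) * (((q : ℤ) - 1) * N - (if k = 1 then 0 else 1))
          + ((μ i : ℤ) * ((q : ℤ) * N - 2) - ((N : ℤ) - (μ i : ℤ))) := by
    rw [Finset.sum_congr rfl (fun j hj => hF i j hi (Finset.ne_of_mem_erase hj)),
      Finset.sum_add_distrib, ← Finset.mul_sum, hsumN,
      Finset.sum_ite_eq (Finset.univ.erase (1 : H)) i, if_pos hii]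
  have hsumF2 : ∑ j ∈ Finset.univ.erase (1 : H),
      ((D j ∩ (fun d : G => d * z⁻¹) ⁻¹' (D i)).ncard : ℤ)
        = ((N : ℤ) - μ i) * (((q : ℤ) - 1) * N - (if k = 1 then 0 else 1))
          + ((μ i : ℤ) * ((q : ℤ) * N - 2) - ((N : ℤ) - (μ i : ℤ))) := by
    rw [Finset.sum_congr rfl (fun j hj => hF j i (Finset.ne_of_mem_erase hj) hi)]
    have hre : ∀ j ∈ Finset.univ.erase (1 : H),
        ((N : ℤ) - μ j) * ((N : ℤ) - μ i)
            + (if j = i then ((μ j : ℤ) * ((q : ℤ) * N - 2) - ((N : ℤ) - (μ j : ℤ))) else 0)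
          = ((N : ℤ) - μ i) * ((N : ℤ) - μ j)
            + (if j = i then ((μ i : ℤ) * ((q : ℤ) * N - 2) - ((N : ℤ) - (μ i : ℤ))) else 0) := by
      intro j hj
      rcases eq_or_ne j i with rfl | hne
      · ring
      · rw [if_neg hne, if_neg hne]; ring
    rw [Finset.sum_congr rfl hre, Finset.sum_add_distrib, ← Finset.mul_sum, hsumN,
      Finset.sum_ite_eq' (Finset.univ.erase (1 : H)) i, if_pos hii]
  -- split the full sums at 1
  have hval1 : ((D i ∩ (fun d : G => d * z⁻¹) ⁻¹' (D 1)).ncard : ℤ)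
      = ((D i).ncard : ℤ) - ∑ j ∈ Finset.univ.erase (1 : H),
          ((D i ∩ (fun d : G => d * z⁻¹) ⁻¹' (D j)).ncard : ℤ) := by
    have h0 := hsplitA (D i)
    rw [← Finset.sum_erase_add _ _ (Finset.mem_univ (1 : H))] at h0
    have h1 := congrArg (Nat.cast : ℕ → ℤ) h0
    push_cast at h1
    linarith
  have hval2 : ((D 1 ∩ (fun d : G => d * z⁻¹) ⁻¹' (D i)).ncard : ℤ)
      = ((D i).ncard : ℤ) - ∑ j ∈ Finset.univ.erase (1 : H),
          ((D j ∩ (fun d : G => d * z⁻¹) ⁻¹' (D i)).ncard : ℤ) := by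
    have h0 := hsplitB (D i)
    rw [← Finset.sum_erase_add _ _ (Finset.mem_univ (1 : H)), hpre (D i)] at h0
    have h1 := congrArg (Nat.cast : ℕ → ℤ) h0
    push_cast at h1
    linarith
  -- final computation
  have hμi : (μ i : ℤ) = if i = k then 1 else 0 := hμ' i hi
  have hfinal : ((D i).ncard : ℤ)
      - (((N : ℤ) - μ i) * (((q : ℤ) - 1) * N - (if k = 1 then 0 else 1))
          + ((μ i : ℤ) * ((q : ℤ) * N - 2) - ((N : ℤ) - (μ i : ℤ))))
      = ((N : ℤ) + 1 - if k = 1 then 1 else 0) * ((N : ℤ) - if i = k then 1 else 0)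
          + (if i = k then 1 else 0) := by
    rw [hDiZ, hμi]
    by_cases hik : i = k <;> by_cases hk1 : k = 1
    · exact absurd (hik.trans hk1) hi
    · simp only [hik, hk1, if_true, if_false, ite_true, ite_false]
      ring
    · simp only [hik, hk1, if_true, if_false, ite_true, ite_false]
      ring
    · simp only [hik, hk1, if_true, if_false, ite_true, ite_false]
      ring
  constructor
  · rw [himg (D i) (D 1)]
    rw [hval1, hsumF1]
    exact hfinal
  · rw [himg (D 1) (D i)]
    rw [hval2, hsumF2]
    exact hfinal
end

section
/- Let q ≥ 2 and N ≥ 1 be integers, let G be a finite group of order (qN)², and let H be a finite group of order q with identity 1. Let Σ be a set of (q−1)N subgroups of G, each of order qN, any two distinct members intersecting in {1}; let Σ be partitioned into sets Σ_i of size N indexed by i ∈ H∖{1}; let D_i := (⋃ Σ_i) ∖ {1} for i ≠ 1 and D_1 := G ∖ ⋃_{i≠1} D_i. Fix z ∈ G with z ≠ 1 and let k ∈ H be the unique element with z ∈ D_k. Then |(D_1·z⁻¹) ∩ D_1| = (N + 1 − δ_{1k})·(N − δ_{1k}) + δ_{1k}·qN, where δ_{1k} = 1 if k = 1 and 0 otherwise,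 and D_1·z⁻¹ := {d·z⁻¹ : d ∈ D_1}. -/
/-!
Let `σ` be the set of all members of `Σ`, `m = qN`, and `A = ⋃_{X ∈ σ} X ∖ {1}`, so that
`D₁ = G ∖ A` and `|A| = |σ| (m - 1)`. By inclusion–exclusion
`|D₁z⁻¹ ∩ D₁| = m² - 2|A| + |{x ∈ A | xz ∈ A}|`, and the last set splits over the pairs
`(X, Y) ∈ σ²` with `x ∈ X ∖ {1}`, `xz ∈ Y ∖ {1}`. Two distinct members are complements in `G`
(`|X| |Y| = |G|`, `X ∩ Y = 1`), so such a pair contributes exactly one `x` unless `z ∈ X ∪ Y`,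
when it contributes none; a diagonal pair contributes `m - 2` if `z ∈ X` and nothing otherwise.
As `z` lies in at most one member, the count is `(m - |σ|)² + |σ|` if `z ∉ ⋃ σ` and
`(m - |σ|)² + (m - |σ|)` otherwise, where `m - |σ| = N`.
-/

open Finset

namespace Subgroup

variable {G : Type*} [Group G]

theorem existsUnique_mem_mul_mem_of_disjoint [Finite G] {X Y : Subgroup G} (hXY : Disjoint X Y)
    (hcard : Nat.card X * Nat.card Y = Nat.card G) (g : G) :
    ∃! x, x ∈ X ∧ x * g ∈ Y := by
  obtain ⟨⟨a, b⟩, hab, -⟩ := (isComplement'_of_card_mul_and_disjoint hcard hXY).existsUnique g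
  subst hab
  refine ⟨a⁻¹, ⟨X.inv_mem a.2, by simp⟩, fun x ⟨hx, hxg⟩ => ?_⟩
  have hxa : x * a = x * (a * b) * (b : G)⁻¹ := by group
  have := disjoint_def.1 hXY (X.mul_mem hx a.2) (hxa ▸ Y.mul_mem hxg (Y.inv_mem b.2))
  exact eq_inv_of_mul_eq_one_left this

end Subgroup

section PunctUnion

open scoped Classical

variable {G : Type*} [Group G]

theorem eq_of_ne_one_of_mem_of_mem {σ : Finset (Subgroup G)}
    (hσ : (σ : Set (Subgroup G)).Pairwise Disjoint) {X Y : Subgroup G} (hX : X ∈ σ) (hY : Y ∈ σ)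
    {g : G} (hg : g ≠ 1) (hgX : g ∈ X) (hgY : g ∈ Y) : X = Y :=
  by_contra fun hXY => hg (Subgroup.disjoint_def.1 (hσ hX hY hXY) hgX hgY)

variable [Fintype G]

-- The complement of `punctUnion σ` is the set `D₁`.
noncomputable def punctUnion (σ : Finset (Subgroup G)) : Finset G :=
  {g | g ≠ 1 ∧ ∃ X ∈ σ, g ∈ X}

noncomputable def crossCount (z : G) (X Y : Subgroup G) : ℕ :=
  #{x | (x ∈ X ∧ x ≠ 1) ∧ (x * z ∈ Y ∧ x * z ≠ 1)}

theorem mem_punctUnion {σ : Finset (Subgroup G)} {g : G} :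
    g ∈ punctUnion σ ↔ g ≠ 1 ∧ ∃ X ∈ σ, g ∈ X := by
  simp [punctUnion]

theorem Subgroup.card_filter_mem_ne_one (X : Subgroup G) :
    #{x | x ∈ X ∧ x ≠ 1} = Nat.card X - 1 := by
  rw [← filter_filter, filter_ne', card_erase_of_mem (by simp [X.one_mem]),
    Nat.card_eq_fintype_card, Fintype.card_subtype]

theorem crossCount_self {z : G} (hz : z ≠ 1) (X : Subgroup G) :
    crossCount z X X = if z ∈ X then Nat.card X - 2 else 0 := by
  unfold crossCount
  split_ifs with hzX
  · have hset : ({x | (x ∈ X ∧ x ≠ 1) ∧ (x * z ∈ X ∧ x * z ≠ 1)} : Finset G) =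
        ({x | x ∈ X ∧ x ≠ 1} : Finset G).erase z⁻¹ := by
      ext x
      simp only [mem_filter, mem_univ, true_and, mem_erase, ne_eq, mul_eq_one_iff_eq_inv,
        X.mul_mem_cancel_right hzX]
      tauto
    rw [hset, card_erase_of_mem (by simp [hz, X.inv_mem hzX]), X.card_filter_mem_ne_one]
    omega
  · rw [card_eq_zero, filter_eq_empty_iff]
    rintro x - ⟨⟨hx, -⟩, hxz, -⟩
    exact hzX ((X.mul_mem_cancel_left hx).1 hxz)

theorem crossCount_of_disjoint (z : G) {X Y : Subgroup G} (hXY : Disjoint X Y)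
    (hcard : Nat.card X * Nat.card Y = Nat.card G) :
    crossCount z X Y = if z ∈ X ∨ z ∈ Y then 0 else 1 := by
  unfold crossCount
  split_ifs with hzXY
  · rw [card_eq_zero, filter_eq_empty_iff]
    rintro x - ⟨⟨hx, hx1⟩, hxz, hxz1⟩
    rcases hzXY with hzX | hzY
    · exact hxz1 (Subgroup.disjoint_def.1 hXY (X.mul_mem hx hzX) hxz)
    · exact hx1 (Subgroup.disjoint_def.1 hXY hx ((Y.mul_mem_cancel_right hzY).1 hxz))
  · obtain ⟨hzX, hzY⟩ := not_or.1 hzXY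
    obtain ⟨x₀, ⟨hx₀, hx₀z⟩, huniq⟩ :=
      Subgroup.existsUnique_mem_mul_mem_of_disjoint hXY hcard z
    rw [card_eq_one]
    refine ⟨x₀, eq_singleton_iff_unique_mem.2 ⟨?_, fun x hx => huniq x ?_⟩⟩
    · have hx₀1 : x₀ ≠ 1 := by rintro rfl; exact hzY (by simpa using hx₀z)
      have hx₀z1 : x₀ * z ≠ 1 := by
        rw [Ne, mul_eq_one_iff_eq_inv]; rintro rfl; exact hzX (by simpa using hx₀)
      simp [hx₀, hx₀1, hx₀z, hx₀z1]
    · simp only [mem_filter, mem_univ, true_and] at hx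
      exact ⟨hx.1.1, hx.2.1⟩

theorem card_notMem_and_mul_notMem_add (A : Finset G) (z : G) :
    #{x | x ∉ A ∧ x * z ∉ A} + 2 * #A = Fintype.card G + #{x | x ∈ A ∧ x * z ∈ A} := by
  set B : Finset G := {x | x * z ∈ A}
  have hB : #B = #A :=
    card_nbij' (· * z) (· * z⁻¹) (by intro x hx; simpa [B] using hx)
      (by intro x hx; simpa [B] using hx) (by intro x _; simp) (by intro x _; simp)
  have hcompl : ({x | x ∉ A ∧ x * z ∉ A} : Finset G) = (A ∪ B)ᶜ := by ext; simp [B]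
  have hinter : ({x | x ∈ A ∧ x * z ∈ A} : Finset G) = A ∩ B := by ext; simp [B]
  rw [hcompl, hinter, card_compl]
  have := card_union_add_card_inter A B
  have := card_le_univ (A ∪ B)
  omega

variable {σ : Finset (Subgroup G)} (hσ : (σ : Set (Subgroup G)).Pairwise Disjoint)
include hσ

theorem card_filter_mem_punctUnion {α : Type*} (s : Finset α) (f : α → G) :
    #{a ∈ s | f a ∈ punctUnion σ} = ∑ X ∈ σ, #{a ∈ s | f a ∈ X ∧ f a ≠ 1} := by
  rw [← card_biUnion]
  · congr 1
    ext a
    simp only [mem_filter, mem_biUnion, mem_punctUnion]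
    tauto
  · intro X hX Y hY hXY
    refine disjoint_filter.2 fun a _ ⟨haX, ha1⟩ ⟨haY, _⟩ => hXY ?_
    exact eq_of_ne_one_of_mem_of_mem hσ hX hY ha1 haX haY

theorem card_punctUnion {m : ℕ} (hcard : ∀ X ∈ σ, Nat.card X = m) :
    #(punctUnion σ) = #σ * (m - 1) := by
  have := card_filter_mem_punctUnion hσ univ id
  simp only [id, filter_univ_mem] at this
  rw [this, sum_congr rfl fun X hX => (hcard X hX) ▸ X.card_filter_mem_ne_one, sum_const,
    smul_eq_mul]

theorem card_mem_punctUnion_and_mul_mem_punctUnion (z : G) :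
    #{x | x ∈ punctUnion σ ∧ x * z ∈ punctUnion σ} = ∑ X ∈ σ, ∑ Y ∈ σ, crossCount z X Y := by
  rw [← filter_filter, card_filter_mem_punctUnion hσ _ (· * z), sum_comm]
  refine sum_congr rfl fun Y _ => ?_
  rw [filter_comm]
  refine (card_filter_mem_punctUnion hσ _ id).trans (sum_congr rfl fun X _ => ?_)
  rw [crossCount, filter_filter]
  simp only [id, and_comm]

variable {m : ℕ} (hcard : ∀ X ∈ σ, Nat.card X = m) (hG : Nat.card G = m ^ 2)
include hcard hG

theorem sum_crossCount_of_mem {z : G} (hz : z ≠ 1) {X : Subgroup G} (hX : X ∈ σ) (hzX : z ∈ X) :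
    ∑ Y ∈ σ, crossCount z X Y = m - 2 := by
  rw [← add_sum_erase _ _ hX, crossCount_self hz, if_pos hzX, hcard X hX, add_eq_left]
  refine sum_eq_zero fun Y hY => ?_
  obtain ⟨hYX, hY⟩ := mem_erase.1 hY
  rw [crossCount_of_disjoint z (hσ hX hY hYX.symm) (by rw [hcard X hX, hcard Y hY, hG, sq]),
    if_pos (Or.inl hzX)]

theorem sum_crossCount_of_notMem {z : G} (hz : z ≠ 1) {X : Subgroup G} (hX : X ∈ σ)
    (hzX : z ∉ X) : ∑ Y ∈ σ, crossCount z X Y = #({Y ∈ σ | z ∉ Y}.erase X) := by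
  rw [← add_sum_erase _ _ hX, crossCount_self hz, if_neg hzX, zero_add, ← filter_erase,
    card_filter]
  refine sum_congr rfl fun Y hY => ?_
  obtain ⟨hYX, hY⟩ := mem_erase.1 hY
  rw [crossCount_of_disjoint z (hσ hX hY hYX.symm) (by rw [hcard X hX, hcard Y hY, hG, sq])]
  simp [hzX]

theorem card_mem_punctUnion_and_mul_mem_punctUnion_of_forall_notMem {z : G} (hz : z ≠ 1)
    (hzσ : ∀ X ∈ σ, z ∉ X) :
    #{x | x ∈ punctUnion σ ∧ x * z ∈ punctUnion σ} = (#σ).descFactorial 2 := by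
  rw [card_mem_punctUnion_and_mul_mem_punctUnion hσ,
    sum_congr rfl fun X hX => sum_crossCount_of_notMem hσ hcard hG hz hX (hzσ X hX)]
  have hrow : ∀ X ∈ σ, #({Y ∈ σ | z ∉ Y}.erase X) = #σ - 1 := fun X hX => by
    rw [filter_true_of_mem hzσ, card_erase_of_mem hX]
  rw [sum_congr rfl hrow, sum_const, smul_eq_mul, Nat.descFactorial_succ, Nat.descFactorial_one,
    mul_comm]

theorem card_mem_punctUnion_and_mul_mem_punctUnion_of_mem {z : G} (hz : z ≠ 1) {X₀ : Subgroup G}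
    (hX₀ : X₀ ∈ σ) (hzX₀ : z ∈ X₀) :
    #{x | x ∈ punctUnion σ ∧ x * z ∈ punctUnion σ} = (m - 2) + (#σ - 1).descFactorial 2 := by
  rw [card_mem_punctUnion_and_mul_mem_punctUnion hσ, ← add_sum_erase _ _ hX₀,
    sum_crossCount_of_mem hσ hcard hG hz hX₀ hzX₀]
  have hfilter : {Y ∈ σ | z ∉ Y} = σ.erase X₀ := by
    ext Y
    simp only [mem_filter, mem_erase]
    refine ⟨fun ⟨hY, hzY⟩ => ⟨fun h => hzY (h ▸ hzX₀), hY⟩, fun ⟨hYX₀, hY⟩ => ⟨hY, fun hzY => ?_⟩⟩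
    exact hYX₀ (eq_of_ne_one_of_mem_of_mem hσ hY hX₀ hz hzY hzX₀)
  have hrow : ∀ X ∈ σ.erase X₀, ∑ Y ∈ σ, crossCount z X Y = #σ - 1 - 1 := fun X hX => by
    obtain ⟨hXX₀, hXσ⟩ := mem_erase.1 hX
    have hzX : z ∉ X := fun hzX => hXX₀ (eq_of_ne_one_of_mem_of_mem hσ hXσ hX₀ hz hzX hzX₀)
    rw [sum_crossCount_of_notMem hσ hcard hG hz hXσ hzX, hfilter, card_erase_of_mem hX,
      card_erase_of_mem hX₀]
  rw [sum_congr rfl hrow, sum_const, smul_eq_mul, card_erase_of_mem hX₀, Nat.descFactorial_succ,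
    Nat.descFactorial_one, mul_comm]

theorem card_notMem_and_mul_notMem_punctUnion_of_forall_notMem {z : G} (hz : z ≠ 1)
    (hzσ : ∀ X ∈ σ, z ∉ X) :
    (#{x | x ∉ punctUnion σ ∧ x * z ∉ punctUnion σ} : ℤ) = (m - #σ) ^ 2 + #σ := by
  have key := card_notMem_and_mul_notMem_add (punctUnion σ) z
  rw [card_punctUnion hσ hcard, ← Nat.card_eq_fintype_card, hG,
    card_mem_punctUnion_and_mul_mem_punctUnion_of_forall_notMem hσ hcard hG hz hzσ] at key
  have hm : 1 ≤ m := Nat.one_le_iff_ne_zero.2 fun h => Nat.card_pos.ne' (hG.trans (by simp [h]))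
  zify [hm] at key
  rw [Nat.cast_descFactorial_two] at key
  linear_combination key

theorem card_notMem_and_mul_notMem_punctUnion_of_mem {z : G} (hz : z ≠ 1) {X₀ : Subgroup G}
    (hX₀ : X₀ ∈ σ) (hzX₀ : z ∈ X₀) :
    (#{x | x ∉ punctUnion σ ∧ x * z ∉ punctUnion σ} : ℤ) = (m - #σ) ^ 2 + (m - #σ) := by
  have key := card_notMem_and_mul_notMem_add (punctUnion σ) z
  rw [card_punctUnion hσ hcard, ← Nat.card_eq_fintype_card, hG,
    card_mem_punctUnion_and_mul_mem_punctUnion_of_mem hσ hcard hG hz hX₀ hzX₀] at key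
  have hm : 2 ≤ m := hcard X₀ hX₀ ▸ (X₀.one_lt_card_iff_ne_bot).2
    (Subgroup.ne_bot_iff_exists_ne_one.2 ⟨⟨z, hzX₀⟩, by simpa using hz⟩)
  have hσ1 : 1 ≤ #σ := card_pos.2 ⟨X₀, hX₀⟩
  zify [hm, hm.trans' one_le_two] at key
  rw [Nat.cast_descFactorial_two] at key
  push_cast [hσ1] at key
  linear_combination key

end PunctUnion

section IndexedFamily

open scoped Classical

variable {G H : Type*} [Group G] [Group H] [Fintype H] [DecidableEq H]
  (S : H → Finset (Subgroup G))

theorem pairwise_disjoint_biUnion_erase_one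
    (hSint : ∀ i j : H, i ≠ 1 → j ≠ 1 → ∀ X ∈ S i, ∀ Y ∈ S j, X ≠ Y → X ⊓ Y = ⊥) :
    (((univ.erase 1).biUnion S : Finset (Subgroup G)) : Set (Subgroup G)).Pairwise Disjoint := by
  intro X hX Y hY hXY
  obtain ⟨i, hi, hXi⟩ := mem_biUnion.1 hX
  obtain ⟨j, hj, hYj⟩ := mem_biUnion.1 hY
  exact disjoint_iff.2 (hSint i j (ne_of_mem_erase hi) (ne_of_mem_erase hj) X hXi Y hYj hXY)

theorem card_biUnion_erase_one {N : ℕ} (hScard : ∀ i : H, i ≠ 1 → #(S i) = N)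
    (hSdisj : ∀ i j : H, i ≠ 1 → j ≠ 1 → i ≠ j → Disjoint (S i) (S j)) :
    #((univ.erase 1).biUnion S) = (Fintype.card H - 1) * N := by
  rw [card_biUnion fun i hi j hj => hSdisj i j (ne_of_mem_erase hi) (ne_of_mem_erase hj),
    sum_congr rfl fun i hi => hScard i (ne_of_mem_erase hi), sum_const, smul_eq_mul,
    card_erase_of_mem (mem_univ _), card_univ]

theorem eq_compl_punctUnion_biUnion_erase_one [Fintype G] (D : H → Set G)
    (hD : ∀ i : H, i ≠ 1 → D i = (⋃ X ∈ S i, (X : Set G)) \ {1})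
    (hD1 : D 1 = Set.univ \ ⋃ i ∈ {i : H | i ≠ 1}, D i) :
    D 1 = (punctUnion ((univ.erase 1).biUnion S) : Set G)ᶜ := by
  rw [hD1, ← Set.compl_eq_univ_sdiff]
  congr 1
  ext g
  simp +contextual only [ne_eq, Set.mem_ofPred_eq, not_false_eq_true, hD, Set.mem_iUnion,
    Set.mem_sdiff, SetLike.mem_coe, exists_prop, Set.mem_singleton_iff, mem_punctUnion,
    mem_biUnion, mem_erase, mem_univ, and_true]
  constructor
  · rintro ⟨i, hi, ⟨X, hX, hgX⟩, hg⟩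
    exact ⟨hg, X, ⟨i, hi, hX⟩, hgX⟩
  · rintro ⟨hg, X, ⟨i, hi, hX⟩, hgX⟩
    exact ⟨i, hi, ⟨X, hX, hgX⟩, hg⟩

end IndexedFamily

theorem card_D11_general {G H : Type*} [Group G] [Fintype G] [Group H] [Fintype H] [DecidableEq H]
    (q N : ℕ)
    (hG : Fintype.card G = (q * N) ^ 2) (hH : Fintype.card H = q)
    (S : H → Finset (Subgroup G))
    (hScard : ∀ i : H, i ≠ 1 → (S i).card = N)
    (hSdisj : ∀ i j : H, i ≠ 1 → j ≠ 1 → i ≠ j → Disjoint (S i) (S j))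
    (hSorder : ∀ i : H, i ≠ 1 → ∀ X ∈ S i, Nat.card X = q * N)
    (hSint : ∀ i j : H, i ≠ 1 → j ≠ 1 → ∀ X ∈ S i, ∀ Y ∈ S j, X ≠ Y → X ⊓ Y = ⊥)
    (D : H → Set G)
    (hD : ∀ i : H, i ≠ 1 → D i = (⋃ X ∈ S i, (X : Set G)) \ {1})
    (hD1 : D 1 = Set.univ \ ⋃ i ∈ {i : H | i ≠ 1}, D i)
    (z : G) (hz : z ≠ 1) (k : H) (hk : z ∈ D k) :
    (((fun d => d * z⁻¹) '' D 1 ∩ D 1).ncard : ℤ) =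
        ((N : ℤ) + 1 - if k = 1 then 1 else 0) * ((N : ℤ) - if k = 1 then 1 else 0)
          + (if k = 1 then 1 else 0) * (q * N) := by
  classical
  have hσ := pairwise_disjoint_biUnion_erase_one S hSint
  have hD1σ := eq_compl_punctUnion_biUnion_erase_one S D hD hD1
  have hσcard := card_biUnion_erase_one S hScard hSdisj
  set σ := (univ.erase (1 : H)).biUnion S
  have hcard : ∀ X ∈ σ, Nat.card X = q * N := fun X hX => by
    obtain ⟨i, hi, hXi⟩ := mem_biUnion.1 hX
    exact hSorder i (ne_of_mem_erase hi) X hXi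
  have hG' : Nat.card G = (q * N) ^ 2 := Nat.card_eq_fintype_card.trans hG
  have hσcardℤ : (#σ : ℤ) = q * N - N := by
    have hq1 : 1 ≤ q := hH ▸ Fintype.card_pos
    rw [hσcard, hH]
    push_cast [hq1]
    ring
  have hset : (fun d => d * z⁻¹) '' D 1 ∩ D 1 =
      ↑({x | x ∉ punctUnion σ ∧ x * z ∉ punctUnion σ} : Finset G) := by
    ext x
    simp [Set.image_mul_right, hD1σ, and_comm]
  rw [hset, Set.ncard_coe_finset]
  split_ifs with hk1
  · subst hk1
    rw [hD1σ] at hk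
    have hzσ : ∀ X ∈ σ, z ∉ X := fun X hX hzX => hk (mem_punctUnion.2 ⟨hz, X, hX, hzX⟩)
    rw [card_notMem_and_mul_notMem_punctUnion_of_forall_notMem hσ hcard hG' hz hzσ, hσcardℤ]
    push_cast
    ring
  · rw [hD k hk1] at hk
    obtain ⟨X₀, hX₀, hzX₀⟩ := Set.mem_iUnion₂.1 hk.1
    have hX₀σ : X₀ ∈ σ := mem_biUnion.2 ⟨k, mem_erase.2 ⟨hk1, mem_univ k⟩, hX₀⟩
    rw [card_notMem_and_mul_notMem_punctUnion_of_mem hσ hcard hG' hz hX₀σ hzX₀, hσcardℤ]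
    push_cast
    ring

theorem card_D11 {G H : Type*} [Group G] [Fintype G] [Group H] [Fintype H] [DecidableEq H]
    (q N : ℕ) (hq : 2 ≤ q) (hN : 1 ≤ N)
    (hG : Fintype.card G = (q * N) ^ 2) (hH : Fintype.card H = q)
    (S : H → Finset (Subgroup G))
    (hScard : ∀ i : H, i ≠ 1 → (S i).card = N)
    (hSdisj : ∀ i j : H, i ≠ 1 → j ≠ 1 → i ≠ j → Disjoint (S i) (S j))
    (hSorder : ∀ i : H, i ≠ 1 → ∀ X ∈ S i, Nat.card X = q * N)
    (hSint : ∀ i j : H, i ≠ 1 → j ≠ 1 → ∀ X ∈ S i, ∀ Y ∈ S j, X ≠ Y → X ⊓ Y = ⊥)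
    (D : H → Set G)
    (hD : ∀ i : H, i ≠ 1 → D i = (⋃ X ∈ S i, (X : Set G)) \ {1})
    (hD1 : D 1 = Set.univ \ ⋃ i ∈ {i : H | i ≠ 1}, D i)
    (z : G) (hz : z ≠ 1) (k : H) (hk : z ∈ D k) :
    (((fun d => d * z⁻¹) '' D 1 ∩ D 1).ncard : ℤ) =
        ((N : ℤ) + 1 - if k = 1 then 1 else 0) * ((N : ℤ) - if k = 1 then 1 else 0)
          + (if k = 1 then 1 else 0) * (q * N) :=
  card_D11_general q N hG hH S hScard hSdisj hSorder hSint D hD hD1 z hz k hk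
end

section
/- Let p be a prime and let K be a finite field of characteristic p. Let F be a finite-dimensional K-vector space equipped with a binary operation * : F × F → F such that: (i) a*(x + y) = a*x + a*y for all a, x, y ∈ F; (ii) for all a, b ∈ F with a ≠ b, the map z ↦ a*z − b*z is a bijection of F; and (iii) m*(k·x) = k·(m*x) for all m, x ∈ F and all scalars k ∈ K (the kernel of the prequasifield contains K). Let V := F ⊕ F, and let g : F → K be a balanced function, meaning each value in K is taken exactly |F|/|K| times. Define f : V → K by f(0, y) := g(0) for all y ∈ F, and, for x ≠ 0, f(x, y) := g(m) where m is the unique element of F with y = m*x. Then f is bent: for every nonzero z ∈ V and every c ∈ K, the number of v ∈ V with f(v + z) − f(v) = c equals |V|/|K|. -/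
/-!
The lines `U∞ = 0 × F` and `U m = {(x, m * x)}` form a spread of `F × F`: two of them meet only in
`0`, and every point lies on one of them. The function `f` is `g m` on `U m ∖ 0` and `g 0` on `U∞`.

For `z = (0, b)` on `U∞`, sending `v` to the pair of lines through `v` and through `v + z` (the pair
`(y, y)` when `v = (0, y)`) is a bijection of `F × F` onto the pairs `(m, m')`, under which
`f (v + z) - f v` becomes `g m' - g m`; as `g` is balanced, each value `c` is taken
`|F| * |F| / |K|` times.

For `z = (a, b)` with `a ≠ 0`, lying on `U m₀`, the same map is a bijection between the points off
`U∞`, `U∞ - z` and `U m₀` and the pairs of distinct lines other than `U m₀`. Counting the remaining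
points and pairs directly gives formulas of the same shape in `g 0` and in `g m₀`, which agree
because `g` is balanced.
-/

open Finset Function

theorem card_filter_eq_add_add_add {α : Type*} [Fintype α] (p q r s : α → Prop) [DecidablePred p]
    [DecidablePred q] [DecidablePred r] [DecidablePred s] :
    #{a | p a} = #{a | p a ∧ q a} + #{a | p a ∧ ¬q a ∧ r a} + #{a | p a ∧ ¬q a ∧ ¬r a ∧ s a} +
      #{a | p a ∧ ¬q a ∧ ¬r a ∧ ¬s a} := by
  have h₁ := card_filter_add_card_filter_not (s := {a | p a}) q
  have h₂ := card_filter_add_card_filter_not (s := ({a | p a} : Finset α).filter (¬q ·)) r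
  have h₃ := card_filter_add_card_filter_not
    (s := (({a | p a} : Finset α).filter (¬q ·)).filter (¬r ·)) s
  simp only [filter_filter, and_assoc] at h₁ h₂ h₃
  omega

section Pairs

variable {α K : Type*} [Fintype α] [DecidableEq K]

theorem card_eq_card_mul_of_card_fiber [Fintype K] {g : α → K} {t : ℕ}
    (hg : ∀ k, #{m | g m = k} = t) : Fintype.card α = Fintype.card K * t := by
  rw [← card_univ, card_eq_sum_card_fiberwise (f := g) (t := univ) fun _ _ ↦ mem_univ _]
  simp [hg]

variable [AddCommGroup K]

theorem card_filter_sub_const_eq {g : α → K} {t : ℕ} (hg : ∀ k, #{m | g m = k} = t) (k c : K) :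
    #{m | g m - k = c} = t := by
  simp_rw [sub_eq_iff_eq_add]
  exact hg _

theorem card_filter_const_sub_eq {g : α → K} {t : ℕ} (hg : ∀ k, #{m | g m = k} = t) (k c : K) :
    #{m | k - g m = c} = t := by
  have hrev (m : α) : k - g m = c ↔ g m = k - c := by
    rw [eq_sub_iff_add_eq, sub_eq_iff_eq_add', eq_comm]
  simp_rw [hrev]
  exact hg _

theorem card_pairs_sub_eq {g : α → K} {t : ℕ} (hg : ∀ k, #{m | g m = k} = t) (c : K) :
    #{w : α × α | g w.2 - g w.1 = c} = Fintype.card α * t := by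
  calc #{w : α × α | g w.2 - g w.1 = c} = ∑ m : α, #{m' | g m' - g m = c} := by
        rw [card_filter, Fintype.sum_prod_type]
        simp_rw [← card_filter]
    _ = Fintype.card α * t := by simp [card_filter_sub_const_eq hg]

variable [DecidableEq α]

theorem card_pairs_sub_eq_add (g : α → K) (m₀ : α) (c : K) [Nontrivial α] :
    #{w : α × α | g w.2 - g w.1 = c} =
      #{m | g m - g m₀ = c} + #{m | g m₀ - g m = c} +
        (if c = 0 then Fintype.card α - 2 else 0) +
        #{w : α × α | g w.2 - g w.1 = c ∧ w.1 ≠ m₀ ∧ w.2 ≠ m₀ ∧ w.1 ≠ w.2} := by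
  have hfirst : #{w : α × α | g w.2 - g w.1 = c ∧ w.1 = m₀} = #{m | g m - g m₀ = c} :=
    card_nbij' Prod.snd (m₀, ·) (by intro w; aesop) (by intro m; aesop) (by intro w; aesop)
      (by intro m; aesop)
  have hsecond : #{w : α × α | g w.2 - g w.1 = c ∧ w.1 ≠ m₀ ∧ w.2 = m₀} =
      #{m | g m₀ - g m = c ∧ m ≠ m₀} :=
    card_nbij' Prod.fst (·, m₀) (by intro w; aesop) (by intro m; aesop) (by intro w; aesop)
      (by intro m; aesop)
  have hdiag : #{w : α × α | g w.2 - g w.1 = c ∧ w.1 ≠ m₀ ∧ w.2 ≠ m₀ ∧ w.1 = w.2} =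
      if c = 0 then #{m | m ≠ m₀} else 0 := by
    split_ifs with hc
    · exact card_nbij' Prod.fst (fun m ↦ (m, m)) (by intro w; aesop) (by intro m; aesop)
        (by intro w; aesop) (by intro m; aesop)
    · rw [card_eq_zero, filter_eq_empty_iff]
      rintro ⟨m, m'⟩ - ⟨h, -, -, hmm' : m = m'⟩
      exact hc (by simpa [hmm'] using h.symm)
  have hm₀ : #{m | g m₀ - g m = c ∧ m ≠ m₀} + (if c = 0 then 1 else 0) =
      #{m | g m₀ - g m = c} := by
    rw [← card_filter_add_card_filter_not (s := {m | g m₀ - g m = c}) (· ≠ m₀)]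
    simp only [filter_filter, not_not]
    congr 1
    split_ifs with hc
    · exact (card_eq_one.mpr ⟨m₀, by ext; aesop⟩).symm
    · exact (card_eq_zero.mpr (filter_eq_empty_iff.mpr (by aesop))).symm
  have hne : #{m | m ≠ m₀} = Fintype.card α - 1 := by
    rw [filter_ne', card_erase_of_mem (mem_univ _), card_univ]
  have htwo : 2 ≤ Fintype.card α := Fintype.one_lt_card
  rw [card_filter_eq_add_add_add _ (·.1 = m₀) (·.2 = m₀) (fun w ↦ w.1 = w.2)]
  simp only [← ne_eq]
  rw [hfirst, hsecond, hdiag, hne, ← hm₀]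
  split_ifs <;> omega

end Pairs

structure IsPrequasifield {F : Type*} [AddCommGroup F] (mul : F → F → F) : Prop where
  mul_add : ∀ a x y, mul a (x + y) = mul a x + mul a y
  bijective_mul_sub_mul : ∀ a b, a ≠ b → Bijective fun z ↦ mul a z - mul b z

/-- The `m` with `mul m x = y`; a junk value when `x = 0`. -/
noncomputable def rightDiv {F : Type*} [Nonempty F] (mul : F → F → F) (y x : F) : F :=
  invFun (mul · x) y

noncomputable def spreadFun {F K : Type*} [AddCommGroup F] [DecidableEq F] (mul : F → F → F)
    (g : F → K) (v : F × F) : K :=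
  if v.1 = 0 then g 0 else g (rightDiv mul v.2 v.1)

section SpreadFun

variable {F K : Type*} [AddCommGroup F] [DecidableEq F] {mul : F → F → F} {g : F → K}

theorem spreadFun_zero_left (y : F) : spreadFun mul g (0, y) = g 0 :=
  if_pos rfl

theorem spreadFun_of_ne_zero {x : F} (hx : x ≠ 0) (y : F) :
    spreadFun mul g (x, y) = g (rightDiv mul y x) :=
  if_neg hx

theorem spreadFun_add_sub [AddCommGroup K] {x a : F} (hx : x ≠ 0) (hxa : x + a ≠ 0) (y b : F) :
    spreadFun mul g ((x, y) + (a, b)) - spreadFun mul g (x, y) =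
      g (rightDiv mul (y + b) (x + a)) - g (rightDiv mul y x) := by
  rw [Prod.mk_add_mk, spreadFun_of_ne_zero hx, spreadFun_of_ne_zero hxa]

end SpreadFun

namespace IsPrequasifield

variable {F : Type*} [AddCommGroup F] {mul : F → F → F}

theorem mul_zero (hP : IsPrequasifield mul) (m : F) : mul m 0 = 0 :=
  (AddMonoidHom.mk' (mul m) (hP.mul_add m)).map_zero

theorem mul_neg (hP : IsPrequasifield mul) (m x : F) : mul m (-x) = -mul m x :=
  (AddMonoidHom.mk' (mul m) (hP.mul_add m)).map_neg x

theorem eq_zero_of_mul_eq_mul (hP : IsPrequasifield mul) {m n x : F} (hmn : m ≠ n)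
    (h : mul m x = mul n x) : x = 0 :=
  (hP.bijective_mul_sub_mul m n hmn).1 <| by simp [h, hP.mul_zero]

theorem mul_add_eq_mul_add_iff (hP : IsPrequasifield mul) {m m' x a b : F} :
    mul m' (x + a) = mul m x + b ↔ mul m' x - mul m x = b - mul m' a := by
  rw [hP.mul_add, sub_eq_sub_iff_add_eq_add, add_comm b]

theorem existsUnique_mul_add_eq (hP : IsPrequasifield mul) {m m' : F} (h : m' ≠ m) (a b : F) :
    ∃! x, mul m' (x + a) = mul m x + b := by
  simp_rw [hP.mul_add_eq_mul_add_iff]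
  exact (hP.bijective_mul_sub_mul m' m h).existsUnique (b - mul m' a)

section Finite

variable [Finite F]

theorem mul_left_bijective (hP : IsPrequasifield mul) {x : F} (hx : x ≠ 0) :
    Bijective (mul · x) :=
  Finite.injective_iff_bijective.mp fun _ _ h ↦
    by_contra fun hmn ↦ hx (hP.eq_zero_of_mul_eq_mul hmn h)

theorem rightDiv_mul_cancel (hP : IsPrequasifield mul) {x : F} (hx : x ≠ 0) (y : F) :
    mul (rightDiv mul y x) x = y :=
  invFun_eq ((hP.mul_left_bijective hx).2 y)

theorem rightDiv_eq_iff (hP : IsPrequasifield mul) {x : F} (hx : x ≠ 0) {y m : F} :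
    rightDiv mul y x = m ↔ mul m x = y :=
  ⟨fun h ↦ h ▸ hP.rightDiv_mul_cancel hx y,
    fun h ↦ (hP.mul_left_bijective hx).1 <| (hP.rightDiv_mul_cancel hx y).trans h.symm⟩

theorem mul_rightDiv_cancel (hP : IsPrequasifield mul) {x : F} (hx : x ≠ 0) (m : F) :
    rightDiv mul (mul m x) x = m :=
  (hP.rightDiv_eq_iff hx).2 rfl

theorem rightDiv_ne_of_off_line (hP : IsPrequasifield mul) {a b : F} (ha : a ≠ 0) {x y : F}
    (hx : x ≠ 0) (hxa : x + a ≠ 0) (hy : y ≠ mul (rightDiv mul b a) x) :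
    rightDiv mul y x ≠ rightDiv mul b a ∧ rightDiv mul (y + b) (x + a) ≠ rightDiv mul b a ∧
      rightDiv mul y x ≠ rightDiv mul (y + b) (x + a) := by
  have hm : mul (rightDiv mul y x) x = y := hP.rightDiv_mul_cancel hx y
  have hm' : mul (rightDiv mul (y + b) (x + a)) (x + a) = y + b := hP.rightDiv_mul_cancel hxa _
  refine ⟨fun h ↦ hy (h ▸ hm.symm), fun h ↦ hy ?_, fun h ↦ hy ?_⟩
  · rw [h, hP.mul_add, hP.rightDiv_mul_cancel ha] at hm'
    exact (add_right_cancel hm').symm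
  · rw [← h, hP.mul_add, hm] at hm'
    rw [(hP.rightDiv_eq_iff ha).2 (add_left_cancel hm'), hm]

theorem exists_mul_add_eq_of_ne (hP : IsPrequasifield mul) {a b : F} (ha : a ≠ 0) {m m' : F}
    (hm : m ≠ rightDiv mul b a) (hm' : m' ≠ rightDiv mul b a) (hmm' : m ≠ m') :
    ∃ x, x ≠ 0 ∧ x + a ≠ 0 ∧ mul m' (x + a) = mul m x + b := by
  have hm₀ {n : F} (h : mul n a = b) : n = rightDiv mul b a := ((hP.rightDiv_eq_iff ha).2 h).symm
  obtain ⟨x, hx, -⟩ := hP.existsUnique_mul_add_eq (Ne.symm hmm') a b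
  refine ⟨x, ?_, ?_, hx⟩
  · rintro rfl
    rw [zero_add, hP.mul_zero, zero_add] at hx
    exact hm' (hm₀ hx)
  · intro hxa
    rw [hxa, hP.mul_zero, eq_neg_of_add_eq_zero_left hxa, hP.mul_neg, eq_comm,
      neg_add_eq_zero] at hx
    exact hm (hm₀ hx)

end Finite

variable [Fintype F] [DecidableEq F] {K : Type*}

theorem eq_spreadFun (hP : IsPrequasifield mul) {g : F → K} {f : F × F → K}
    (hf0 : ∀ y, f (0, y) = g 0) (hf : ∀ x, x ≠ 0 → ∀ m, f (x, mul m x) = g m) :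
    f = spreadFun mul g := by
  ext ⟨x, y⟩
  by_cases hx : x = 0
  · simp [spreadFun, hx, hf0]
  · rw [spreadFun, if_neg hx, ← hf x hx, hP.rightDiv_mul_cancel hx]

variable [AddCommGroup K] [DecidableEq K] {a b : F} {g : F → K} {c : K}

theorem card_spreadFun_sub_eq_of_fst_eq_zero (hP : IsPrequasifield mul) (hb : b ≠ 0) :
    #{v : F × F | spreadFun mul g (v + (0, b)) - spreadFun mul g v = c} =
      #{w : F × F | g w.2 - g w.1 = c} := by
  set Φ : F × F → F × F := fun v ↦
    if v.1 = 0 then (v.2, v.2) else (rightDiv mul v.2 v.1, rightDiv mul (v.2 + b) v.1)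
  have hrightDiv_ne {x : F} (hx : x ≠ 0) (y : F) : rightDiv mul y x ≠ rightDiv mul (y + b) x := by
    intro h
    have := hP.rightDiv_mul_cancel hx (y + b)
    rw [← h, hP.rightDiv_mul_cancel hx] at this
    exact hb (by simpa using this.symm)
  have hsub {x : F} (hx : x ≠ 0) (y : F) :
      mul (rightDiv mul (y + b) x) x - mul (rightDiv mul y x) x = b := by
    simp [hP.rightDiv_mul_cancel hx]
  have hinj : Injective Φ := by
    rintro ⟨x, y⟩ ⟨x', y'⟩ h
    by_cases hx : x = 0 <;> by_cases hx' : x' = 0 <;>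
      simp only [Φ, hx, hx', if_true, if_false, Prod.mk.injEq] at h
    · rw [hx, hx', h.1]
    · exact absurd (h.1.symm.trans h.2) (hrightDiv_ne hx' y')
    · exact absurd (h.1.trans h.2.symm) (hrightDiv_ne hx y)
    · obtain ⟨h1, h2⟩ := h
      have hxx : x = x' := (hP.bijective_mul_sub_mul _ _ (hrightDiv_ne hx y).symm).1 <|
        (hsub hx y).trans <| by rw [h1, h2]; exact (hsub hx' y').symm
      subst hxx
      rw [← hP.rightDiv_mul_cancel hx y, h1, hP.rightDiv_mul_cancel hx]
  refine card_bijective Φ (Finite.injective_iff_bijective.mp hinj) fun ⟨x, y⟩ ↦ ?_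
  by_cases hx : x = 0
  · subst hx; simp [Φ, spreadFun_zero_left]
  · simp [Φ, hx, spreadFun_of_ne_zero hx]

theorem card_spreadFun_sub_filter_fst_eq_zero (hP : IsPrequasifield mul) (ha : a ≠ 0) :
    #{v : F × F | spreadFun mul g (v + (a, b)) - spreadFun mul g v = c ∧ v.1 = 0} =
      #{m | g m - g 0 = c} := by
  refine card_nbij' (fun v ↦ rightDiv mul (v.2 + b) a) (fun m ↦ (0, mul m a - b)) ?_ ?_ ?_ ?_
  · rintro ⟨x, y⟩ hv
    simp only [mem_coe, mem_filter, mem_univ, true_and] at hv ⊢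
    obtain ⟨hv, rfl⟩ := hv
    simpa [spreadFun_of_ne_zero ha, spreadFun_zero_left] using hv
  · intro m hm
    simp only [mem_coe, mem_filter, mem_univ, true_and] at hm ⊢
    simpa [spreadFun_of_ne_zero ha, spreadFun_zero_left, hP.mul_rightDiv_cancel ha] using hm
  · rintro ⟨x, y⟩ hv
    simp only [mem_coe, mem_filter, mem_univ, true_and] at hv
    simp [hv.2, hP.rightDiv_mul_cancel ha]
  · intro m _
    simp [hP.mul_rightDiv_cancel ha]

theorem card_spreadFun_sub_filter_fst_eq_neg (hP : IsPrequasifield mul) (ha : a ≠ 0) :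
    #{v : F × F | spreadFun mul g (v + (a, b)) - spreadFun mul g v = c ∧ v.1 ≠ 0 ∧ v.1 = -a} =
      #{m | g 0 - g m = c} := by
  have ha' : -a ≠ 0 := neg_ne_zero.2 ha
  refine card_nbij' (fun v ↦ rightDiv mul v.2 (-a)) (fun m ↦ (-a, mul m (-a))) ?_ ?_ ?_ ?_
  · rintro ⟨x, y⟩ hv
    simp only [mem_coe, mem_filter, mem_univ, true_and] at hv ⊢
    obtain ⟨hv, -, rfl⟩ := hv
    simpa [spreadFun_of_ne_zero ha', spreadFun_zero_left] using hv
  · intro m hm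
    simp only [mem_coe, mem_filter, mem_univ, true_and] at hm ⊢
    simpa [spreadFun_of_ne_zero ha', spreadFun_zero_left, hP.mul_rightDiv_cancel ha', ha]
      using hm
  · rintro ⟨x, y⟩ hv
    simp only [mem_coe, mem_filter, mem_univ, true_and] at hv
    obtain ⟨-, -, rfl⟩ := hv
    simp [hP.rightDiv_mul_cancel ha']
  · intro m _
    simp [hP.mul_rightDiv_cancel ha']

theorem card_spreadFun_sub_filter_on_line (hP : IsPrequasifield mul) (ha : a ≠ 0) :
    #{v : F × F | spreadFun mul g (v + (a, b)) - spreadFun mul g v = c ∧ v.1 ≠ 0 ∧ v.1 ≠ -a ∧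
        v.2 = mul (rightDiv mul b a) v.1} =
      if c = 0 then Fintype.card F - 2 else 0 := by
  set m₀ := rightDiv mul b a
  have hdiff {x : F} (hx : x ≠ 0) (hxa : x ≠ -a) :
      spreadFun mul g ((x, mul m₀ x) + (a, b)) - spreadFun mul g (x, mul m₀ x) = 0 := by
    have hxa' : x + a ≠ 0 := fun h ↦ hxa (eq_neg_of_add_eq_zero_left h)
    -- `b = m₀ * a`, so `v + (a, b)` stays on the line `U m₀` through `v`
    rw [Prod.mk_add_mk, ← hP.rightDiv_mul_cancel ha b, ← hP.mul_add,
      spreadFun_of_ne_zero hxa', spreadFun_of_ne_zero hx, hP.mul_rightDiv_cancel hx,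
      hP.mul_rightDiv_cancel hxa', sub_self]
  split_ifs with hc
  · calc _ = #((univ.erase (0 : F)).erase (-a)) := by
          refine card_nbij' Prod.fst (fun x ↦ (x, mul m₀ x)) ?_ ?_ ?_ ?_
          · rintro ⟨x, y⟩ hv
            simp only [mem_coe, mem_filter, mem_univ, true_and] at hv
            simp [hv.2.1, hv.2.2.1]
          · intro x hx
            simp only [mem_coe, mem_erase, mem_univ, and_true] at hx
            simp only [mem_coe, mem_filter, mem_univ, true_and]
            exact ⟨hc ▸ hdiff hx.2 hx.1, hx.2, hx.1, trivial⟩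
          · rintro ⟨x, y⟩ hv
            simp only [mem_coe, mem_filter, mem_univ, true_and] at hv
            simp [hv.2.2.2]
          · intro x _
            rfl
      _ = Fintype.card F - 2 := by
          rw [card_erase_of_mem (mem_erase.2 ⟨neg_ne_zero.2 ha, mem_univ _⟩),
            card_erase_of_mem (mem_univ _), card_univ, Nat.sub_sub]
  · rw [card_eq_zero, filter_eq_empty_iff]
    rintro ⟨x, y⟩ - ⟨h, hx, hxa, hy : y = mul m₀ x⟩
    subst hy
    exact hc (h ▸ hdiff hx hxa)

theorem card_spreadFun_sub_filter_off_line (hP : IsPrequasifield mul) (ha : a ≠ 0) :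
    #{v : F × F | spreadFun mul g (v + (a, b)) - spreadFun mul g v = c ∧ v.1 ≠ 0 ∧ v.1 ≠ -a ∧
        v.2 ≠ mul (rightDiv mul b a) v.1} =
      #{w : F × F | g w.2 - g w.1 = c ∧ w.1 ≠ rightDiv mul b a ∧ w.2 ≠ rightDiv mul b a ∧
        w.1 ≠ w.2} := by
  have hsum {x : F} (hxa : x ≠ -a) : x + a ≠ 0 := fun h ↦ hxa (eq_neg_of_add_eq_zero_left h)
  have hline {x : F} (hx : x ≠ 0) (hxa : x + a ≠ 0) (y : F) :
      mul (rightDiv mul (y + b) (x + a)) (x + a) = mul (rightDiv mul y x) x + b := by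
    rw [hP.rightDiv_mul_cancel hx, hP.rightDiv_mul_cancel hxa]
  refine card_nbij (fun v ↦ (rightDiv mul v.2 v.1, rightDiv mul (v.2 + b) (v.1 + a))) ?_ ?_ ?_
  · rintro ⟨x, y⟩ hv
    simp only [mem_coe, mem_filter, mem_univ, true_and] at hv ⊢
    obtain ⟨hv, hx, hxa, hy⟩ := hv
    rw [spreadFun_add_sub hx (hsum hxa)] at hv
    exact ⟨hv, hP.rightDiv_ne_of_off_line ha hx (hsum hxa) hy⟩
  · rintro ⟨x, y⟩ hv ⟨x', y'⟩ hv' h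
    simp only [mem_coe, mem_filter, mem_univ, true_and] at hv hv'
    simp only [Prod.mk.injEq] at h
    have hne := (hP.rightDiv_ne_of_off_line ha hv.2.1 (hsum hv.2.2.1) hv.2.2.2).2.2
    have hxx : x = x' := (hP.existsUnique_mul_add_eq (Ne.symm hne) a b).unique
      (hline hv.2.1 (hsum hv.2.2.1) y)
      (by rw [h.1, h.2]; exact hline hv'.2.1 (hsum hv'.2.2.1) y')
    subst hxx
    rw [← hP.rightDiv_mul_cancel hv.2.1 y, h.1, hP.rightDiv_mul_cancel hv.2.1]
  · rintro ⟨m, m'⟩ hw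
    simp only [mem_coe, mem_filter, mem_univ, true_and] at hw
    obtain ⟨hw, hm, hm', hmm'⟩ := hw
    obtain ⟨x, hx, hxa, hmx⟩ := hP.exists_mul_add_eq_of_ne ha hm hm' hmm'
    have hpair : rightDiv mul (mul m x) x = m ∧ rightDiv mul (mul m x + b) (x + a) = m' :=
      ⟨hP.mul_rightDiv_cancel hx m, (hP.rightDiv_eq_iff hxa).2 hmx⟩
    refine ⟨(x, mul m x), ?_, Prod.ext hpair.1 hpair.2⟩
    simp only [mem_coe, mem_filter, mem_univ, true_and]
    refine ⟨?_, hx, fun h ↦ hxa (h ▸ neg_add_cancel a), fun h ↦ hx (hP.eq_zero_of_mul_eq_mul hm h)⟩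
    rwa [spreadFun_add_sub hx hxa, hpair.1, hpair.2]

theorem card_spreadFun_sub_eq_of_fst_ne_zero (hP : IsPrequasifield mul) (ha : a ≠ 0) :
    #{v : F × F | spreadFun mul g (v + (a, b)) - spreadFun mul g v = c} =
      #{m | g m - g 0 = c} + #{m | g 0 - g m = c} + (if c = 0 then Fintype.card F - 2 else 0) +
        #{w : F × F | g w.2 - g w.1 = c ∧ w.1 ≠ rightDiv mul b a ∧ w.2 ≠ rightDiv mul b a ∧
          w.1 ≠ w.2} := by
  rw [card_filter_eq_add_add_add _ (·.1 = 0) (·.1 = -a) fun v ↦ v.2 = mul (rightDiv mul b a) v.1]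
  simp only [← ne_eq]
  rw [hP.card_spreadFun_sub_filter_fst_eq_zero ha, hP.card_spreadFun_sub_filter_fst_eq_neg ha,
    hP.card_spreadFun_sub_filter_on_line ha, hP.card_spreadFun_sub_filter_off_line ha]

theorem card_spreadFun_sub_eq (hP : IsPrequasifield mul) {t : ℕ} (hg : ∀ k, #{m | g m = k} = t)
    {z : F × F} (hz : z ≠ 0) (c : K) :
    #{v : F × F | spreadFun mul g (v + z) - spreadFun mul g v = c} = Fintype.card F * t := by
  obtain ⟨a, b⟩ := z
  by_cases ha : a = 0
  · subst ha
    have hb : b ≠ 0 := by rintro rfl; exact hz rfl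
    rw [hP.card_spreadFun_sub_eq_of_fst_eq_zero hb, card_pairs_sub_eq hg]
  · have : Nontrivial F := ⟨⟨a, 0, ha⟩⟩
    rw [hP.card_spreadFun_sub_eq_of_fst_ne_zero ha, ← card_pairs_sub_eq hg c,
      card_pairs_sub_eq_add g (rightDiv mul b a) c]
    simp only [card_filter_sub_const_eq hg, card_filter_const_sub_eq hg]

end IsPrequasifield

theorem bent_of_prequasifield_general
    {K : Type*} [Field K] [Fintype K]
    {F : Type*} [AddCommGroup F] [Fintype F]
    (mul : F → F → F)
    (hdist : ∀ a x y : F, mul a (x + y) = mul a x + mul a y)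
    (hbij : ∀ a b : F, a ≠ b → Function.Bijective (fun z => mul a z - mul b z))
    (g : F → K)
    (hg : ∀ c : K, Nat.card {m : F | g m = c} = Fintype.card F / Fintype.card K)
    (f : F × F → K)
    (hf0 : ∀ y : F, f (0, y) = g 0)
    (hf : ∀ x : F, x ≠ 0 → ∀ m : F, f (x, mul m x) = g m) :
    ∀ z : F × F, z ≠ 0 → ∀ c : K,
      Nat.card {v : F × F | f (v + z) - f v = c}
        = Fintype.card (F × F) / Fintype.card K := by
  classical
  intro z hz c
  have hP : IsPrequasifield mul := ⟨hdist, hbij⟩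
  obtain rfl := hP.eq_spreadFun hf0 hf
  have hfib (k : K) : #{m | g m = k} = Fintype.card F / Fintype.card K := by
    rw [← hg k, Nat.card_eq_fintype_card, Fintype.card_subtype]
    rfl
  have hdvd : Fintype.card K ∣ Fintype.card F := ⟨_, card_eq_card_mul_of_card_fiber hfib⟩
  rw [Nat.card_eq_fintype_card, Fintype.card_subtype, Fintype.card_prod, Nat.mul_div_assoc _ hdvd]
  exact hP.card_spreadFun_sub_eq hfib hz c

/-- Theorem: for a prequasifield `(F, +, *)` of characteristic `p` whose kernel
contains the field `K`, and a balanced function `g : F → K`, the function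
`f : F ⊕ F → K` defined by `f (0, y) = g 0` and `f (x, m*x) = g m` for `x ≠ 0`
is bent. -/
theorem bent_of_prequasifield {p : ℕ} [Fact p.Prime]
    {K : Type*} [Field K] [Fintype K] [CharP K p]
    {F : Type*} [AddCommGroup F] [Module K F] [Fintype F]
    (mul : F → F → F)
    (hdist : ∀ a x y : F, mul a (x + y) = mul a x + mul a y)
    (hbij : ∀ a b : F, a ≠ b → Function.Bijective (fun z => mul a z - mul b z))
    (hker : ∀ (m x : F) (k : K), mul m (k • x) = k • mul m x)
    (g : F → K)
    (hg : ∀ c : K, Nat.card {m : F | g m = c} = Fintype.card F / Fintype.card K)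
    (f : F × F → K)
    (hf0 : ∀ y : F, f (0, y) = g 0)
    (hf : ∀ x : F, x ≠ 0 → ∀ m : F, f (x, mul m x) = g m) :
    ∀ z : F × F, z ≠ 0 → ∀ c : K,
      Nat.card {v : F × F | f (v + z) - f v = c}
        = Fintype.card (F × F) / Fintype.card K :=
  bent_of_prequasifield_general mul hdist hbij g hg f hf0 hf
end

section
/- Let p be a prime and let K be a finite field of characteristic p. Let F be a finite-dimensional K-vector space with a fixed basis, giving dot products on F and on V := F ⊕ F (where (a,b)·(x,y) := a·x + b·y). Let * : F × F → F satisfy: (i) a*(x + y) = a*x + a*y for all a, x, y ∈ F; (ii) for all a ≠ b in F, the map z ↦ a*z − b*z is a bijection of F; (iii) m*(k·x) = k·(m*x) for all m, x ∈ F, k ∈ K. Let T : K → 𝔽_p be a nonzero 𝔽_p-linear functional, and let ζ ∈ ℂ be a primitive p-th root of unity. Let g : F → K be balanced (each value in K taken |F|/|K| times), and define f : V → K by f(0, y) := g(0), and f(x, y) := g(m) for x ≠ 0, where m is the unique element of F with y = m*x. Then for every k ∈ K with k ≠ 0 and every (a, b) ∈ V, the complex number ∑_{(x,y) ∈ V}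 ζ^{T(a·x + b·y + k·f(x,y))} has absolute value |F| = |V|^{1/2}. -/
/-!
Write `ψ c = ζ ^ (T c)` and `α = a ⬝ᵥ ·`, `β = b ⬝ᵥ ·`. Off the column `x = 0` the lines
`y = m * x` cover each point once, so the sum is
`ψ (k g 0) ∑_y ψ (β y) + ∑_m ψ (k g m) ∑_x ψ (α x + β (m * x))`: the terms `x = 0` added to the
second sum contribute `∑_m ψ (k g m)`, which vanishes because `g` is balanced. The inner sums are
`|F|` or `0` according as the linear functional `α + β ∘ (m * ·)` vanishes. If `β = 0` only the
first term survives. If `β ≠ 0`, `m ↦ α + β ∘ (m * ·)` is injective (as `z ↦ m * z - m' * z` is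
onto), hence a bijection onto the dual, and exactly one `m` survives. Either way the sum is
`|F| ψ (k g m)` for some `m`.
-/

open Finset Module

namespace AddChar

variable {K F R : Type*} [Field K] [AddCommGroup F] [Module K F] [Fintype F]
  [CommRing R] [IsDomain R]

lemma sum_apply_linearMap_eq_ite [DecidableEq (F →ₗ[K] K)] {ψ : AddChar K R} (hψ : ψ ≠ 0)
    (L : F →ₗ[K] K) : ∑ x, ψ (L x) = if L = 0 then (Fintype.card F : R) else 0 := by
  have hψL : ψ.compAddMonoidHom L.toAddMonoidHom = 0 ↔ L = 0 := by
    refine ⟨fun hL => ?_, fun hL => by ext; simp [hL]⟩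
    by_contra hL0
    obtain ⟨x, hx⟩ := DFunLike.ne_iff.mp hL0
    obtain ⟨c, hc⟩ := ne_zero_iff.mp hψ
    refine hc ?_
    simpa [div_mul_cancel₀ c hx] using DFunLike.congr_fun hL ((c / L x) • x)
  classical
  have := (ψ.compAddMonoidHom L.toAddMonoidHom).sum_eq_ite
  simp only [hψL] at this
  exact this

lemma zmodChar_compAddMonoidHom_ne_zero {A C : Type*} [AddMonoid A] [CommMonoid C]
    {p : ℕ} [NeZero p] {ζ : C} (hζ : IsPrimitiveRoot ζ p) {T : A →+ ZMod p} (hT : T ≠ 0) :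
    (zmodChar p hζ.pow_eq_one).compAddMonoidHom T ≠ 0 := by
  obtain ⟨c, hc⟩ := DFunLike.ne_iff.mp hT
  exact ne_zero_iff.mpr ⟨c, fun h1 => hc <|
    (IsPrimitive.zmod_char_eq_one_iff p (zmodChar_primitive_of_primitive_root p hζ) _).mp h1⟩

end AddChar

lemma Fintype.sum_comp_eq_nsmul_sum_of_card_fiber {X K M : Type*} [Fintype X] [Fintype K]
    [AddCommMonoid M] (g : X → K) {N : ℕ}
    (hg : ∀ c, Nat.card {x | g x = c} = N) (φ : K → M) :
    ∑ x, φ (g x) = N • ∑ c, φ c := by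
  classical
  rw [← Finset.sum_fiberwise Finset.univ g, Finset.smul_sum]
  refine Finset.sum_congr rfl fun c _ => ?_
  rw [Finset.sum_congr rfl fun x hx => congrArg φ (Finset.mem_filter.mp hx).2, Finset.sum_const,
    ← hg c, Nat.card_eq_fintype_card, Fintype.card_subtype]
  rfl

structure IsPrequasifieldMul (K : Type*) {F : Type*} [Field K] [AddCommGroup F] [Module K F]
    (mul : F → F → F) : Prop where
  mul_add : ∀ a x y, mul a (x + y) = mul a x + mul a y
  bijective_mul_sub : ∀ a b, a ≠ b → Function.Bijective fun z => mul a z - mul b z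
  mul_smul : ∀ (m x : F) (k : K), mul m (k • x) = k • mul m x

namespace IsPrequasifieldMul

variable {K F : Type*} [Field K] [AddCommGroup F] [Module K F] {mul : F → F → F}
  (h : IsPrequasifieldMul K mul)
include h

def mulLeft (m : F) : F →ₗ[K] F where
  toFun := mul m
  map_add' := h.mul_add m
  map_smul' k x := h.mul_smul m x k

@[simp] lemma mulLeft_apply (m x : F) : h.mulLeft m x = mul m x := rfl

lemma mul_zero (m : F) : mul m 0 = 0 := (h.mulLeft m).map_zero

lemma bijective_mul_right [Finite F] {x : F} (hx : x ≠ 0) :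
    Function.Bijective fun m => mul m x := by
  refine Finite.injective_iff_bijective.mp fun m m' hmm' => ?_
  by_contra hne
  refine hx ((h.bijective_mul_sub m m' hne).injective ?_)
  simp only [hmm', sub_self, h.mul_zero]

lemma injective_add_comp_mulLeft (α : Dual K F) {β : Dual K F} (hβ : β ≠ 0) :
    Function.Injective fun m => α + β ∘ₗ h.mulLeft m := by
  intro m m' hmm'
  by_contra hne
  refine hβ (LinearMap.ext fun y => ?_)
  obtain ⟨z, rfl⟩ := (h.bijective_mul_sub m m' hne).surjective y
  have := LinearMap.congr_fun hmm' z
  simpa [sub_eq_zero] using this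

lemma existsUnique_add_comp_mulLeft_eq_zero [Finite F] [FiniteDimensional K F]
    (α : Dual K F) {β : Dual K F} (hβ : β ≠ 0) :
    ∃! m, α + β ∘ₗ h.mulLeft m = 0 := by
  let e := (Module.Free.chooseBasis K F).toDualEquiv.toEquiv
  have : Finite (Dual K F) := Finite.of_equiv F e
  exact ((h.injective_add_comp_mulLeft α hβ).bijective_of_nat_card_le
    (Nat.card_congr e).ge).existsUnique 0

variable [Fintype F] {ψ : AddChar K ℂ} {g : F → K} {f : F × F → K} {k : K}

lemma sum_addChar_eq (hf0 : ∀ y, f (0, y) = g 0) (hf : ∀ x ≠ 0, ∀ m, f (x, mul m x) = g m)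
    (hg : ∑ m, ψ (k * g m) = 0) (α β : Dual K F) :
    ∑ v : F × F, ψ (α v.1 + β v.2 + k * f v)
      = ψ (k * g 0) * ∑ y, ψ (β y) + ∑ m, ψ (k * g m) * ∑ x, ψ ((α + β ∘ₗ h.mulLeft m) x) := by
  classical
  have hrow : ∀ x ≠ 0, ∑ y, ψ (α x + β y + k * f (x, y))
      = ∑ m, ψ ((α + β ∘ₗ h.mulLeft m) x) * ψ (k * g m) := fun x hx =>
    (Fintype.sum_bijective _ (h.bijective_mul_right hx) _ _ fun m => by
      simp [hf x hx, AddChar.map_add_eq_mul]).symm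
  calc ∑ v : F × F, ψ (α v.1 + β v.2 + k * f v)
      = ∑ y, ψ (α 0 + β y + k * f (0, y))
          + ∑ x ∈ univ.erase 0, ∑ y, ψ (α x + β y + k * f (x, y)) :=
        (Fintype.sum_prod_type _).trans (add_sum_erase _ _ (mem_univ 0)).symm
    _ = ψ (k * g 0) * ∑ y, ψ (β y)
          + ∑ x, ∑ m, ψ ((α + β ∘ₗ h.mulLeft m) x) * ψ (k * g m) := by
        rw [sum_congr rfl fun x hx => hrow x (ne_of_mem_erase hx),
          sum_erase _ (by simpa [h.mul_zero])]
        simp [hf0, AddChar.map_add_eq_mul, mul_sum, mul_comm]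
    _ = _ := by
        rw [sum_comm]
        simp only [mul_sum, mul_comm]

theorem norm_sum_addChar_eq_card [Fintype K] (hψ : ψ ≠ 0) (hf0 : ∀ y, f (0, y) = g 0)
    (hf : ∀ x ≠ 0, ∀ m, f (x, mul m x) = g m) {N : ℕ} (hg : ∀ c, Nat.card {m | g m = c} = N)
    (hk : k ≠ 0) (α β : Dual K F) :
    ‖∑ v : F × F, ψ (α v.1 + β v.2 + k * f v)‖ = Fintype.card F := by
  classical
  have hbal : ∑ m, ψ (k * g m) = 0 := by
    have hψk : ψ.mulShift k ≠ 0 := AddChar.IsPrimitive.of_ne_one hψ hk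
    have := Fintype.sum_comp_eq_nsmul_sum_of_card_fiber g hg (ψ.mulShift k)
    rwa [(ψ.mulShift k).sum_eq_ite, if_neg hψk, smul_zero] at this
  suffices ∃ m, ∑ v : F × F, ψ (α v.1 + β v.2 + k * f v) = Fintype.card F * ψ (k * g m) by
    obtain ⟨m, hm⟩ := this
    simp [hm]
  simp only [h.sum_addChar_eq hf0 hf hbal, AddChar.sum_apply_linearMap_eq_ite hψ]
  by_cases hβ : β = 0
  · refine ⟨0, ?_⟩
    simp [hβ, ← mul_sum, hbal, mul_comm]
  · obtain ⟨m₀, hm₀, huniq⟩ := h.existsUnique_add_comp_mulLeft_eq_zero α hβ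
    have : ∀ m, α + β ∘ₗ h.mulLeft m = 0 ↔ m = m₀ := fun m => ⟨huniq m, fun hm => hm ▸ hm₀⟩
    refine ⟨m₀, ?_⟩
    simp [hβ, this, mul_comm]

end IsPrequasifieldMul

theorem fourier_bent_of_prequasifield_general {p : ℕ} [Fact p.Prime]
    {K : Type*} [Field K] [Fintype K] (n : ℕ)
    (mul : (Fin n → K) → (Fin n → K) → (Fin n → K))
    (hdist : ∀ a x y : Fin n → K, mul a (x + y) = mul a x + mul a y)
    (hbij : ∀ a b : Fin n → K, a ≠ b → Function.Bijective (fun z => mul a z - mul b z))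
    (hker : ∀ (m x : Fin n → K) (k : K), mul m (k • x) = k • mul m x)
    (T : K →+ ZMod p) (hT : T ≠ 0)
    (ζ : ℂ) (hζ : IsPrimitiveRoot ζ p)
    (g : (Fin n → K) → K)
    (hg : ∀ c : K, Nat.card {m : Fin n → K | g m = c}
      = Fintype.card (Fin n → K) / Fintype.card K)
    (f : (Fin n → K) × (Fin n → K) → K)
    (hf0 : ∀ y : Fin n → K, f (0, y) = g 0)
    (hf : ∀ x : Fin n → K, x ≠ 0 → ∀ m : Fin n → K, f (x, mul m x) = g m) :
    ∀ k : K, k ≠ 0 → ∀ a b : Fin n → K,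
      ‖(∑ v : (Fin n → K) × (Fin n → K),
          ζ ^ (T (∑ i, a i * v.1 i + ∑ i, b i * v.2 i + k * f v)).val)‖
        = Fintype.card (Fin n → K) ∧
      (Fintype.card (Fin n → K) : ℝ)
        = Real.sqrt (Fintype.card ((Fin n → K) × (Fin n → K))) := by
  intro k hk a b
  have : NeZero p := ⟨(Fact.out : p.Prime).ne_zero⟩
  refine ⟨?_, by rw [Fintype.card_prod, Nat.cast_mul, Real.sqrt_mul_self (Nat.cast_nonneg _)]⟩
  -- the frozen sum is this one up to unfolding `dotProduct` and `zmodChar`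
  exact IsPrequasifieldMul.norm_sum_addChar_eq_card ⟨hdist, hbij, hker⟩
    (AddChar.zmodChar_compAddMonoidHom_ne_zero hζ hT) hf0 hf hg hk
    (dotProductEquiv K (Fin n) a) (dotProductEquiv K (Fin n) b)

/-- Fourier-side computation: with `F = K^n` (dot products from the standard basis),
a prequasifield multiplication `*` whose kernel contains `K`, a nonzero 𝔽_p-linear
functional `T : K → 𝔽_p`, a primitive `p`-th root of unity `ζ`, and a balanced
`g : F → K`, the function `f` with `f (0,y) = g 0` and `f (x, m*x) = g m` satisfies
`|∑_{(x,y)} ζ^{T(a·x + b·y + k f(x,y))}| = |F| = |V|^{1/2}` for all `k ≠ 0`, `(a,b)`. -/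
theorem fourier_bent_of_prequasifield {p : ℕ} [Fact p.Prime]
    {K : Type*} [Field K] [Fintype K] [CharP K p] (n : ℕ)
    (mul : (Fin n → K) → (Fin n → K) → (Fin n → K))
    (hdist : ∀ a x y : Fin n → K, mul a (x + y) = mul a x + mul a y)
    (hbij : ∀ a b : Fin n → K, a ≠ b → Function.Bijective (fun z => mul a z - mul b z))
    (hker : ∀ (m x : Fin n → K) (k : K), mul m (k • x) = k • mul m x)
    (T : K →+ ZMod p) (hT : T ≠ 0)
    (ζ : ℂ) (hζ : IsPrimitiveRoot ζ p)
    (g : (Fin n → K) → K)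
    (hg : ∀ c : K, Nat.card {m : Fin n → K | g m = c}
      = Fintype.card (Fin n → K) / Fintype.card K)
    (f : (Fin n → K) × (Fin n → K) → K)
    (hf0 : ∀ y : Fin n → K, f (0, y) = g 0)
    (hf : ∀ x : Fin n → K, x ≠ 0 → ∀ m : Fin n → K, f (x, mul m x) = g m) :
    ∀ k : K, k ≠ 0 → ∀ a b : Fin n → K,
      ‖(∑ v : (Fin n → K) × (Fin n → K),
          ζ ^ (T (∑ i, a i * v.1 i + ∑ i, b i * v.2 i + k * f v)).val)‖
        = Fintype.card (Fin n → K) ∧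
      (Fintype.card (Fin n → K) : ℝ)
        = Real.sqrt (Fintype.card ((Fin n → K) × (Fin n → K))) :=
  fourier_bent_of_prequasifield_general n mul hdist hbij hker T hT ζ hζ g hg f hf0 hf
end

section
/- Let K be a finite field, let F be a finite-dimensional K-vector space with a nondegenerate symmetric K-bilinear form ⟨·,·⟩ (e.g., the dot product with respect to a fixed basis), and let (L_m)_{m ∈ F} be a family of K-linear endomorphisms of F, indexed by the elements of F, such that L_m − L_{m'} is injective whenever m ≠ m'. For each m let L_mᵗ denote the adjoint of L_m with respect to the form, i.e., ⟨b, L_m x⟩ = ⟨L_mᵗ b, x⟩ for all b, x ∈ F. Then for every b ∈ F with b ≠ 0, the map F → F given by m ↦ L_mᵗ(b) is a bijection. -/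
/-!
If `L_mᵗ b = L_{m'}ᵗ b` with `m ≠ m'`, then `b` is orthogonal to the image of `L_m - L_{m'}`,
which is all of `F` since an injective endomorphism of a finite-dimensional space is
surjective; nondegeneracy forces `b = 0`. So `m ↦ L_mᵗ b` is injective, hence bijective as `F`
is finite.
-/

namespace LinearMap

theorem IsAdjointPair.eq_zero_of_apply_eq_zero {R M M₁ N : Type*} [CommSemiring R]
    [AddCommMonoid M] [Module R M] [AddCommMonoid M₁] [Module R M₁] [AddCommMonoid N]
    [Module R N] {B : M →ₗ[R] M →ₗ[R] N} {B' : M₁ →ₗ[R] M₁ →ₗ[R] N} {f : M → M₁} {g : M₁ → M} (h : IsAdjointPair B B' f g)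
    (hB : B.SeparatingLeft) (hg : Function.Surjective g) {x : M} (hx : f x = 0) : x = 0 :=
  hB x fun y ↦ by
    obtain ⟨z, rfl⟩ := hg y
    rw [← h, hx, map_zero, zero_apply]

theorem injective_apply_of_isAdjointPair {R M ι : Type*} [CommRing R] [AddCommGroup M]
    [Module R M] {B : LinearMap.BilinForm R M} (hB : B.SeparatingLeft) {f g : ι → M →ₗ[R] M}
    (hfg : ∀ i, IsAdjointPair B B (f i) (g i))
    (hg : ∀ i j, i ≠ j → Function.Surjective ⇑(g i - g j)) {b : M} (hb : b ≠ 0) :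
    Function.Injective fun i ↦ f i b := by
  intro i j hij
  by_contra hne
  exact hb <| ((hfg i).sub (hfg j)).eq_zero_of_apply_eq_zero hB (hg i j hne)
    (sub_eq_zero.mpr hij)

end LinearMap

theorem bijective_transpose_eval_general {K F : Type*} [Field K] [Fintype K]
    [AddCommGroup F] [Module K F] [FiniteDimensional K F]
    (B : LinearMap.BilinForm K F)
    (hBnd : B.Nondegenerate)
    (L : F → F →ₗ[K] F)
    (hL : ∀ m m' : F, m ≠ m' → Function.Injective ⇑(L m - L m'))
    (Lt : F → F →ₗ[K] F)
    (hLt : ∀ m b x : F, B b (L m x) = B (Lt m b) x) :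
    ∀ b : F, b ≠ 0 → Function.Bijective (fun m : F => Lt m b) := by
  intro b hb
  have : Finite F := Module.finite_of_finite K
  refine Finite.injective_iff_bijective.mp <| LinearMap.injective_apply_of_isAdjointPair hBnd.1
    (fun m b x ↦ (hLt m b x).symm) (fun m m' hne ↦ ?_) hb
  exact LinearMap.injective_iff_surjective.mp (hL m m' hne)

/-- If `(L_m)_{m ∈ F}` is a family of linear endomorphisms of a finite-dimensional
vector space `F` over a finite field `K` such that `L_m - L_{m'}` is injective for
`m ≠ m'`, and `L_mᵗ` denotes the adjoint with respect to a nondegenerate symmetric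
bilinear form, then for `b ≠ 0` the map `m ↦ L_mᵗ b` is a bijection. -/
theorem bijective_transpose_eval {K F : Type*} [Field K] [Fintype K]
    [AddCommGroup F] [Module K F] [FiniteDimensional K F]
    (B : LinearMap.BilinForm K F) (hBsymm : ∀ x y : F, B x y = B y x)
    (hBnd : B.Nondegenerate)
    (L : F → F →ₗ[K] F)
    (hL : ∀ m m' : F, m ≠ m' → Function.Injective ⇑(L m - L m'))
    (Lt : F → F →ₗ[K] F)
    (hLt : ∀ m b x : F, B b (L m x) = B (Lt m b) x) :
    ∀ b : F, b ≠ 0 → Function.Bijective (fun m : F => Lt m b) :=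
  bijective_transpose_eval_general B hBnd L hL Lt hLt
end

section
/- Let p be a prime and let m ≥ s ≥ 1 be integers. Let G be an elementary abelian p-group of order p^{2m} and let H be ANY group of order p^s. Then there exists a bent function f : G → H; that is, a function f such that for every z ∈ G with z ≠ 1 and every b ∈ H, the number of x ∈ G with f(x·z)·f(x)⁻¹ = b equals p^{2m−s}. (In particular, the existence of a bent function from G onto a group of order p^s does not depend on the isomorphism type of H.) -/
/-!
Identify `G` with `F × F` for `F = 𝔽_{p^m}`, pick `τ : F → H` with all fibres of size
`p^(m-s)`, and let `f (x, y) = τ (y / x)`: it is constant on the punctured lines through the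
origin (the Desarguesian spread), and since `y / 0 = 0` the line `x = 0` shares the value
`τ 0` with the line `y = 0`. Fix `z = (a, c) ≠ 0` and count the solutions of
`f (x + z) = b * f x` line by line in the first coordinate. Substituting `y = x u` turns the
count on a line into the number of `u` with `τ (σ u) = b * τ u` for an affine map `σ`: a
translation `u ↦ u + c / x` when `a = 0`, a homothety about `c / a` when `a ≠ 0`. As the
line varies, `σ` runs once through all such maps, apart from one or two exceptional lines,
and summing over the family is a double count: for each `u` other than the centre of the
homotheties, the values `σ u` sweep out `F`, so they hit each fibre of `τ` exactly
`p^(m-s)` times.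
-/

open Finset

theorem Finset.sum_card_filter_comm {α β : Type*} [Fintype α] [Fintype β] (r : α → β → Prop)
    [∀ a b, Decidable (r a b)] : ∑ a, #{b | r a b} = ∑ b, #{a | r a b} :=
  sum_card_bipartiteAbove_eq_sum_card_bipartiteBelow r

theorem card_filter_comp_bijective_eq {α β : Type*} [Fintype α] [DecidableEq β] {τ : α → β}
    {k : ℕ} (hτ : ∀ h, #{v | τ v = h} = k) {σ : α → α} (hσ : Function.Bijective σ) (h : β) :
    #{u | τ (σ u) = h} = k :=
  (card_equiv (Equiv.ofBijective σ hσ) (by simp)).trans (hτ h)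

theorem exists_card_filter_eq {α β : Type*} [Fintype α] [Fintype β] [DecidableEq β] {k : ℕ}
    (h : Fintype.card α = Fintype.card β * k) : ∃ τ : α → β, ∀ b, #{a | τ a = b} = k := by
  obtain ⟨e⟩ : Nonempty (α ≃ β × Fin k) := Fintype.card_eq.mp (by simp [h])
  refine ⟨fun a => (e a).1, fun b => ?_⟩
  rw [card_equiv e (t := {b} ×ˢ univ) fun a => by simp [Prod.ext_iff, eq_comm]]
  simp

theorem nonempty_linearEquiv_of_natCard_eq {K V W : Type*} [Field K] [Finite K]
    [AddCommGroup V] [Module K V] [Finite V] [AddCommGroup W] [Module K W] [Finite W]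
    (h : Nat.card V = Nat.card W) : Nonempty (V ≃ₗ[K] W) := by
  have := Module.Finite.of_finite (R := K) (M := V)
  have := Module.Finite.of_finite (R := K) (M := W)
  refine FiniteDimensional.nonempty_linearEquiv_of_finrank_eq
    (Nat.pow_right_injective (Finite.one_lt_card (α := K)) ?_)
  simpa [← Module.natCard_eq_pow_finrank] using h

theorem natCard_mul_inv_eq_comp_addEquiv {G V H : Type*} [CommGroup G] [AddCommGroup V]
    [Fintype V] [Group H] [DecidableEq H] (e : Additive G ≃+ V) (f : V → H) (z : G) (b : H) :
    Nat.card {x : G | f (e (.ofMul (x * z))) * (f (e (.ofMul x)))⁻¹ = b} =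
      #{y | f (y + e (.ofMul z)) = b * f y} := by
  rw [← Fintype.card_subtype, ← Nat.card_eq_fintype_card]
  exact Nat.card_congr ((Additive.ofMul.trans e.toEquiv).subtypeEquiv fun x => by
    simp [mul_inv_eq_iff_eq_mul])

section Spread

variable {H : Type*} [Group H] [DecidableEq H] {k : ℕ}

theorem sum_card_translate {A : Type*} [AddGroup A] [Fintype A] {τ : A → H}
    (hτ : ∀ h, #{v | τ v = h} = k) (b : H) :
    ∑ c : A, #{u | τ (u + c) = b * τ u} = Fintype.card A * k := by
  rw [sum_card_filter_comm, sum_congr rfl fun u _ =>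
    card_filter_comp_bijective_eq (σ := (u + ·)) hτ (Equiv.addLeft u).bijective _]
  simp

variable {F : Type*} [Field F] [Fintype F] {τ : F → H}

theorem sum_card_homothety [DecidableEq F] (hτ : ∀ h, #{v | τ v = h} = k) (β : F) (b : H) :
    ∑ s : F, #{u | τ (s * (u - β) + β) = b * τ u} =
      (Fintype.card F - 1) * k + if b = 1 then Fintype.card F else 0 := by
  rw [sum_card_filter_comm, ← add_sum_erase _ _ (mem_univ β)]
  have hβ : #{s : F | τ (s * (β - β) + β) = b * τ β} = if b = 1 then Fintype.card F else 0 := by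
    split_ifs with hb <;> simp [hb]
  have hu : ∀ u ∈ univ.erase β, #{s | τ (s * (u - β) + β) = b * τ u} = k := by
    intro u hu
    have : u - β ≠ 0 := sub_ne_zero.mpr (ne_of_mem_erase hu)
    refine card_filter_comp_bijective_eq hτ ?_ _
    exact Finite.injective_iff_bijective.mp fun s t hst => by simpa [this] using hst
  rw [hβ, sum_congr rfl hu, sum_const, card_erase_of_mem (mem_univ β), card_univ, smul_eq_mul,
    add_comm]

theorem card_filter_eq_card_filter_mul_left {P : F → Prop} [DecidablePred P] {x : F}
    (hx : x ≠ 0) : #{y | P y} = #{u | P (x * u)} :=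
  (card_equiv (Equiv.mulLeft₀ x hx) (by simp)).symm

theorem sum_card_line_of_fst_eq_zero (hτ : ∀ h, #{v | τ v = h} = k) {c : F} (hc : c ≠ 0)
    (b : H) : ∑ x : F, #{y | τ ((y + c) / x) = b * τ (y / x)} = Fintype.card F * k := by
  have hline : ∀ x : F, #{y | τ ((y + c) / x) = b * τ (y / x)} =
      #{u | τ (u + c / x) = b * τ u} := by
    intro x
    rcases eq_or_ne x 0 with rfl | hx
    · simp
    · rw [card_filter_eq_card_filter_mul_left hx]
      congr! 4 <;> field_simp
  have hinv : Function.Bijective fun x : F => c / x :=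
    Finite.injective_iff_bijective.mp fun x y hxy => by simpa [div_eq_mul_inv, hc] using hxy
  rw [sum_congr rfl fun x _ => hline x, hinv.sum_comp (fun d => #{u | τ (u + d) = b * τ u}),
    sum_card_translate hτ]

theorem sum_card_line_of_fst_ne_zero [DecidableEq F] (hτ : ∀ h, #{v | τ v = h} = k) {a : F}
    (ha : a ≠ 0) (c : F) (b : H) :
    ∑ x : F, #{y | τ ((y + c) / (x + a)) = b * τ (y / x)} = Fintype.card F * k := by
  -- index the lines by `w = x + a`; the line `w` carries the homothety of ratio `1 - a / w`
  have hline : ∀ w ≠ 0, #{y | τ ((y + c) / w) = b * τ (y / (w - a))} =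
      #{u | τ ((1 - a / w) * (u - c / a) + c / a) = b * τ u} := by
    intro w hw
    rcases eq_or_ne w a with rfl | hwa
    · trans k
      · simpa using card_filter_comp_bijective_eq (σ := fun y => (y + c) / w) hτ
          (Finite.injective_iff_bijective.mp fun x y hxy => by simpa [hw] using hxy) (b * τ 0)
      · simpa [hw, eq_comm (a := τ (c / w)), ← inv_mul_eq_iff_eq_mul] using
          (hτ (b⁻¹ * τ (c / w))).symm
    · rw [card_filter_eq_card_filter_mul_left (sub_ne_zero.mpr hwa)]
      congr! 4 <;> field_simp; ring
  have hline₀ : #{y | τ ((y + c) / 0) = b * τ (y / (0 - a))} = k := by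
    simpa [eq_comm (a := τ 0), ← inv_mul_eq_iff_eq_mul] using
      card_filter_comp_bijective_eq (σ := fun y => y / -a) hτ
        (Finite.injective_iff_bijective.mp fun x y hxy => by simpa [ha] using hxy) (b⁻¹ * τ 0)
  have hidentity : #{u | τ ((1 - a / 0) * (u - c / a) + c / a) = b * τ u} =
      if b = 1 then Fintype.card F else 0 := by
    split_ifs with hb <;> simp [hb]
  have hratio : Function.Bijective fun w : F => 1 - a / w :=
    Finite.injective_iff_bijective.mp fun x y hxy => by simpa [div_eq_mul_inv, ha] using hxy
  have hsum := hratio.sum_comp (fun s => #{u | τ (s * (u - c / a) + c / a) = b * τ u})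
  rw [sum_card_homothety hτ, ← add_sum_erase _ _ (mem_univ 0), hidentity] at hsum
  rw [← (Equiv.subRight a).sum_comp, ← add_sum_erase _ _ (mem_univ 0)]
  simp only [Equiv.subRight_apply, sub_add_cancel]
  rw [hline₀, sum_congr rfl fun w hw => hline w (ne_of_mem_erase hw)]
  have hk := Nat.le_mul_of_pos_left k (Fintype.card_pos (α := F))
  rw [Nat.sub_one_mul] at hsum
  omega

theorem card_filter_slope_add_eq [DecidableEq F] (hτ : ∀ h, #{v | τ v = h} = k) {z : F × F}
    (hz : z ≠ 0) (b : H) :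
    #{x : F × F | τ ((x + z).2 / (x + z).1) = b * τ (x.2 / x.1)} = Fintype.card F * k := by
  obtain ⟨a, c⟩ := z
  have hlines : #{x : F × F | τ ((x + (a, c)).2 / (x + (a, c)).1) = b * τ (x.2 / x.1)} =
      ∑ x : F, #{y | τ ((y + c) / (x + a)) = b * τ (y / x)} := by
    simp only [card_filter, Fintype.sum_prod_type, Prod.fst_add, Prod.snd_add]
  rw [hlines]
  rcases eq_or_ne a 0 with rfl | ha
  · simpa using sum_card_line_of_fst_eq_zero hτ (by simpa using hz) b
  · exact sum_card_line_of_fst_ne_zero hτ ha c b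

end Spread

/-- For any prime `p`, integers `m ≥ s ≥ 1`, an elementary abelian `p`-group `G` of
order `p^{2m}` and ANY group `H` of order `p^s`, there exists a bent function
`f : G → H`: for every `z ≠ 1` and `b ∈ H`, the equation `f(xz) f(x)⁻¹ = b` has
exactly `p^{2m-s}` solutions `x ∈ G`. -/
theorem exists_bent_function_to_any_group
    (p : ℕ) [Fact p.Prime] (m s : ℕ) (hs : 1 ≤ s) (hms : s ≤ m)
    {G : Type*} [CommGroup G] [Fintype G]
    (hG : Fintype.card G = p ^ (2 * m)) (hGel : ∀ g : G, g ^ p = 1)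
    {H : Type*} [Group H] [Fintype H] (hH : Fintype.card H = p ^ s) :
    ∃ f : G → H, ∀ z : G, z ≠ 1 → ∀ b : H,
      Nat.card {x : G | f (x * z) * (f x)⁻¹ = b} = p ^ (2 * m - s) := by
  classical
  let F := GaloisField p m
  let : Fintype F := Fintype.ofFinite F
  have hF : Fintype.card F = p ^ m := by
    rw [← Nat.card_eq_fintype_card]; exact GaloisField.card p m (by omega)
  let : Module (ZMod p) (Additive G) := AddCommGroup.zmodModule fun x => hGel x.toMul
  obtain ⟨e⟩ : Nonempty (Additive G ≃+ F × F) :=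
    (nonempty_linearEquiv_of_natCard_eq (K := ZMod p) (by
      simp [Nat.card_eq_fintype_card, hG, hF, ← pow_add, two_mul])).map (·.toAddEquiv)
  obtain ⟨τ, hτ⟩ := exists_card_filter_eq (α := F) (β := H) (k := p ^ (m - s))
    (by rw [hF, hH, ← pow_add]; congr 1; omega)
  refine ⟨fun g => τ ((e (.ofMul g)).2 / (e (.ofMul g)).1), fun z hz b => ?_⟩
  rw [natCard_mul_inv_eq_comp_addEquiv e (fun x => τ (x.2 / x.1)),
    card_filter_slope_add_eq hτ (by simpa using hz), hF, ← pow_add]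
  congr 1
  omega
end
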